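/- arXiv:1406.7683 — 7 statements merged into one kernel-verified Lean document; each statement's English description precedes it below -/
import Mathlib

section
/- Let p(x) = aₙxⁿ + ⋯ + a₀ and q(x) = bₘxᵐ + ⋯ + b₀ be polynomials in ℂ[x] with aₙ·bₘ ≠ 0, and let k be a nonnegative integer with k ≤ (n+m)/2. Then p and q have exactly k common roots counting multiplicity (equivalently, the degree of gcd(p,q) equals k) if and only if R₀(p,q) = R₁(p,q) = ⋯ = R_{k−1}(p,q) = 0 and R_k(p,q) ≠ 0. -/
/-- The Sylvester matrix of two polynomials of formal degrees `n` and `m`,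
given by their coefficient functions `P` and `Q` (`P i` is the coefficient of
`xⁱ`).  Its first `m` rows contain the coefficient vector `(P n, …, P 0)`
successively shifted to the right (row `i` has `P n` in column `i`), and its
last `n` rows contain the coefficient vector `(Q m, …, Q 0)` in reversed shift
order (row `m + t`, `0 ≤ t < n`, has `Q m` in column `n - 1 - t`). -/
def sylvesterMat {R : Type*} [CommRing R] (n m : ℕ) (P Q : ℕ → R) :
    Matrix (Fin (n + m)) (Fin (n + m)) R :=
  Matrix.of fun i s =>
    if (i : ℕ) < m then
      (if (i : ℕ) ≤ (s : ℕ) ∧ (s : ℕ) ≤ (i : ℕ) + n then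
        P (n - ((s : ℕ) - (i : ℕ))) else 0)
    else
      (if n - 1 - ((i : ℕ) - m) ≤ (s : ℕ) ∧ (s : ℕ) ≤ n - 1 - ((i : ℕ) - m) + m then
        Q (m + n - 1 - ((i : ℕ) - m) - (s : ℕ)) else 0)

/-- The `k`-subresultant of two polynomials of formal degrees `n` and `m`:
the determinant of the matrix obtained from the Sylvester matrix by deleting
its first `k` and last `k` rows and its first `k` and last `k` columns. -/
def subresultant {R : Type*} [CommRing R] (n m : ℕ) (P Q : ℕ → R) (k : ℕ) : R :=
  Matrix.det (Matrix.of fun r c : Fin (n + m - 2 * k) =>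
    sylvesterMat n m P Q
      ⟨k + (r : ℕ), by have := r.isLt; omega⟩
      ⟨k + (c : ℕ), by have := c.isLt; omega⟩)


/-!
Row `i` of the Sylvester matrix lists the coefficients of `X ^ (m - 1 - i) * p` (for `i < m`),
resp. `X ^ (i - m) * q`, in degrees `n + m - 1, …, 0`. Hence a left kernel vector of the
`k`-th subresultant matrix is a pair `(u, v) ≠ 0` with `deg u < m - k`, `deg v < n - k` such that
`u p + v q` has no coefficients in degrees `k, …, n + m - 1 - k`; as `deg (u p + v q) < n + m - k`
anyway, `R_k = 0` iff some such pair has `deg (u p + v q) < k`.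

Write `p = g p₁`, `q = g q₁` with `g = gcd p q`. If `k < deg g`, the pair `(q₁, -p₁)` annihilates.
If `k = deg g`, then `u p + v q` is a multiple of `g` of degree `< deg g`, hence zero, so
`q₁ ∣ u p₁` and, by coprimality, `q₁ ∣ u`; since `deg u < deg q₁` this forces `u = 0`, then `v = 0`.
-/

open Polynomial
open scoped Matrix

theorem Polynomial.mul_mem_degreeLT {R : Type*} [CommRing R] {u p : R[X]} {a n : ℕ}
    (hu : u ∈ degreeLT R a) (hp : p.natDegree ≤ n) : u * p ∈ degreeLT R (a + n) := by
  rcases eq_or_ne u 0 with rfl | hu0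
  · rw [zero_mul]
    exact zero_mem _
  rw [mem_degreeLT, ← natDegree_lt_iff_degree_lt hu0] at hu
  rw [mem_degreeLT]
  exact degree_le_natDegree.trans_lt (by exact_mod_cast natDegree_mul_le.trans_lt (by omega))

theorem Polynomial.natDegree_eq_add_of_eq_mul {R : Type*} [CommRing R] [NoZeroDivisors R]
    {p g p₁ : R[X]} (hp : p ≠ 0) (h : p = g * p₁) :
    g ≠ 0 ∧ p₁ ≠ 0 ∧ p.natDegree = g.natDegree + p₁.natDegree := by
  obtain ⟨hg, hp₁⟩ := mul_ne_zero_iff.mp (h ▸ hp)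
  exact ⟨hg, hp₁, by rw [h, natDegree_mul hg hp₁]⟩

theorem EuclideanDomain.exists_eq_gcd_mul_isCoprime {R : Type*} [EuclideanDomain R]
    [DecidableEq R] {p q : R} (hq : q ≠ 0) :
    ∃ p₁ q₁, p = EuclideanDomain.gcd p q * p₁ ∧ q = EuclideanDomain.gcd p q * q₁ ∧
      IsCoprime p₁ q₁ := by
  -- under this instance `GCDMonoid.gcd` unfolds to `EuclideanDomain.gcd`
  let := EuclideanDomain.gcdMonoid R
  have hg : GCDMonoid.gcd p q ≠ 0 := gcd_ne_zero_of_right hq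
  exact ⟨_, _, (EuclideanDomain.mul_div_cancel' hg (gcd_dvd_left p q)).symm,
    (EuclideanDomain.mul_div_cancel' hg (gcd_dvd_right p q)).symm, isCoprime_div_gcd_div_gcd hq⟩

section SylvesterRows

variable {R : Type*} [CommRing R]

noncomputable def sylvesterRowPoly (m : ℕ) (p q : R[X]) (i : ℕ) : R[X] :=
  if i < m then X ^ (m - 1 - i) * p else X ^ (i - m) * q

theorem sylvesterMat_apply {n m : ℕ} {p q : R[X]} (hp : p.natDegree ≤ n) (hq : q.natDegree ≤ m)
    (i s : Fin (n + m)) :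
    sylvesterMat n m p.coeff q.coeff i s = (sylvesterRowPoly m p q i).coeff (n + m - 1 - s) := by
  have := i.isLt
  have := s.isLt
  simp only [sylvesterMat, sylvesterRowPoly, Matrix.of_apply, apply_ite (coeff · (n + m - 1 - s)),
    coeff_X_pow_mul']
  split_ifs <;> first
    | rfl
    | exact congrArg _ (by omega)
    | (exfalso; omega)
    | (symm; apply coeff_eq_zero_of_natDegree_lt; omega)

def subresultantMat (n m : ℕ) (P Q : ℕ → R) (k : ℕ) :
    Matrix (Fin (n + m - 2 * k)) (Fin (n + m - 2 * k)) R :=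
  Matrix.of fun r c => sylvesterMat n m P Q ⟨k + r, by omega⟩ ⟨k + c, by omega⟩

theorem subresultant_eq_det (n m : ℕ) (P Q : ℕ → R) (k : ℕ) :
    subresultant n m P Q k = (subresultantMat n m P Q k).det :=
  rfl

end SylvesterRows

section VectorPolys

variable {R : Type*} [CommRing R] {N : ℕ}

noncomputable def revPrefixPoly (c : Fin N → R) (a : ℕ) : R[X] :=
  ∑ r : Fin N, if (r : ℕ) < a then C (c r) * X ^ (a - 1 - r) else 0

noncomputable def suffixPoly (c : Fin N → R) (a : ℕ) : R[X] :=
  ∑ r : Fin N, if a ≤ (r : ℕ) then C (c r) * X ^ (r - a) else 0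

def prefixSuffixVec (N a : ℕ) (u v : R[X]) : Fin N → R :=
  fun r => if (r : ℕ) < a then u.coeff (a - 1 - r) else v.coeff (r - a)

theorem coeff_revPrefixPoly (c : Fin N → R) {a : ℕ} (ha : a ≤ N) (j : ℕ) :
    (revPrefixPoly c a).coeff j = if h : j < a then c ⟨a - 1 - j, by omega⟩ else 0 := by
  simp only [revPrefixPoly, finsetSum_coeff, apply_ite (coeff · j), coeff_C_mul_X_pow, coeff_zero]
  split_ifs with hj
  · rw [Finset.sum_eq_single_of_mem (⟨a - 1 - j, by omega⟩ : Fin N) (Finset.mem_univ _)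
      fun r _ hr => ?_]
    · rw [if_pos (by simp only; omega), if_pos (by simp only; omega)]
    · rw [Ne, Fin.ext_iff] at hr
      split_ifs <;> first | rfl | (exfalso; simp only at hr; omega)
  · exact Finset.sum_eq_zero fun r _ => by split_ifs <;> first | rfl | omega

theorem coeff_suffixPoly (c : Fin N → R) (a j : ℕ) :
    (suffixPoly c a).coeff j = if h : a + j < N then c ⟨a + j, h⟩ else 0 := by
  simp only [suffixPoly, finsetSum_coeff, apply_ite (coeff · j), coeff_C_mul_X_pow, coeff_zero]
  split_ifs with hj
  · rw [Finset.sum_eq_single_of_mem (⟨a + j, hj⟩ : Fin N) (Finset.mem_univ _) fun r _ hr => ?_]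
    · rw [if_pos (by simp only; omega), if_pos (by simp only; omega)]
    · rw [Ne, Fin.ext_iff] at hr
      split_ifs <;> first | rfl | (exfalso; simp only at hr; omega)
  · exact Finset.sum_eq_zero fun r _ => by split_ifs <;> first | rfl | omega

theorem revPrefixPoly_mem_degreeLT (c : Fin N → R) {a : ℕ} (ha : a ≤ N) :
    revPrefixPoly c a ∈ degreeLT R a := by
  rw [mem_degreeLT, degree_lt_iff_coeff_zero]
  intro j hj
  rw [coeff_revPrefixPoly c ha, dif_neg (by omega)]

theorem suffixPoly_mem_degreeLT (c : Fin N → R) (a : ℕ) : suffixPoly c a ∈ degreeLT R (N - a) := by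
  rw [mem_degreeLT, degree_lt_iff_coeff_zero]
  intro j hj
  rw [coeff_suffixPoly, dif_neg (by omega)]

theorem revPrefixPoly_prefixSuffixVec {a : ℕ} (ha : a ≤ N) {u : R[X]} (hu : u ∈ degreeLT R a)
    (v : R[X]) : revPrefixPoly (prefixSuffixVec N a u v) a = u := by
  rw [mem_degreeLT, degree_lt_iff_coeff_zero] at hu
  ext j
  rw [coeff_revPrefixPoly _ ha]
  split_ifs with hj
  · simp only [prefixSuffixVec, if_pos (show a - 1 - j < a by omega)]
    congr 1
    omega
  · exact (hu j (by omega)).symm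

theorem suffixPoly_prefixSuffixVec (a : ℕ) (u : R[X]) {v : R[X]} (hv : v ∈ degreeLT R (N - a)) :
    suffixPoly (prefixSuffixVec N a u v) a = v := by
  rw [mem_degreeLT, degree_lt_iff_coeff_zero] at hv
  ext j
  rw [coeff_suffixPoly]
  split_ifs with hj
  · simp only [prefixSuffixVec, if_neg (show ¬ a + j < a by omega), Nat.add_sub_cancel_left]
  · exact (hv j (by omega)).symm

theorem prefixSuffixVec_revPrefixPoly_suffixPoly (c : Fin N → R) {a : ℕ} (ha : a ≤ N) :
    prefixSuffixVec N a (revPrefixPoly c a) (suffixPoly c a) = c := by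
  funext r
  have := r.isLt
  simp only [prefixSuffixVec, coeff_revPrefixPoly c ha, coeff_suffixPoly]
  split_ifs <;> first | (congr 1; ext; simp only; omega) | (exfalso; omega)

end VectorPolys

section SubresultantKernel

variable {R : Type*} [CommRing R]

theorem sum_C_mul_sylvesterRowPoly {N m k : ℕ} (hkm : k ≤ m) (p q : R[X]) (c : Fin N → R) :
    ∑ r, C (c r) * sylvesterRowPoly m p q (k + r) =
      revPrefixPoly c (m - k) * p + suffixPoly c (m - k) * q := by
  simp only [revPrefixPoly, suffixPoly, Finset.sum_mul, ← Finset.sum_add_distrib]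
  refine Finset.sum_congr rfl fun r _ => ?_
  rw [sylvesterRowPoly]
  rcases lt_or_ge (r : ℕ) (m - k) with hr | hr
  · rw [if_pos (by omega), if_pos hr, if_neg hr.not_ge, zero_mul, add_zero, mul_assoc,
      show m - 1 - (k + r) = m - k - 1 - r by omega]
  · rw [if_neg (by omega), if_neg hr.not_gt, if_pos hr, zero_mul, zero_add, mul_assoc,
      show k + r - m = r - (m - k) by omega]

theorem vecMul_subresultantMat {n m k : ℕ} {p q : R[X]} (hp : p.natDegree ≤ n)
    (hq : q.natDegree ≤ m) (hkm : k ≤ m) (c : Fin (n + m - 2 * k) → R) (s : Fin (n + m - 2 * k)) :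
    (c ᵥ* subresultantMat n m p.coeff q.coeff k) s =
      (revPrefixPoly c (m - k) * p + suffixPoly c (m - k) * q).coeff (n + m - 1 - k - s) := by
  rw [← sum_C_mul_sylvesterRowPoly hkm, finsetSum_coeff, Matrix.vecMul, dotProduct]
  refine Finset.sum_congr rfl fun r _ => ?_
  rw [subresultantMat, Matrix.of_apply, sylvesterMat_apply hp hq, coeff_C_mul]
  congr 2
  simp only
  omega

theorem subresultant_eq_zero_iff [IsDomain R] {n m k : ℕ} {p q : R[X]} (hp : p.natDegree ≤ n)
    (hq : q.natDegree ≤ m) (hkn : k ≤ n) (hkm : k ≤ m) :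
    subresultant n m p.coeff q.coeff k = 0 ↔
      ∃ u ∈ degreeLT R (m - k), ∃ v ∈ degreeLT R (n - k),
        (u ≠ 0 ∨ v ≠ 0) ∧ (u * p + v * q).degree < k := by
  have ha : m - k ≤ n + m - 2 * k := by omega
  have hNa : n + m - 2 * k - (m - k) = n - k := by omega
  rw [subresultant_eq_det, ← Matrix.exists_vecMul_eq_zero_iff]
  constructor
  · rintro ⟨c, hc0, hc⟩
    refine ⟨revPrefixPoly c (m - k), revPrefixPoly_mem_degreeLT c ha,
      suffixPoly c (m - k), hNa ▸ suffixPoly_mem_degreeLT c _, ?_, ?_⟩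
    · contrapose! hc0
      rw [← prefixSuffixVec_revPrefixPoly_suffixPoly c ha, hc0.1, hc0.2]
      funext r
      simp [prefixSuffixVec]
    · have hhigh :
          revPrefixPoly c (m - k) * p + suffixPoly c (m - k) * q ∈ degreeLT R (n + m - k) := by
        refine add_mem ?_ ?_
        · convert mul_mem_degreeLT (revPrefixPoly_mem_degreeLT c ha) hp using 2; omega
        · convert mul_mem_degreeLT (suffixPoly_mem_degreeLT c (m - k)) hq using 2; omega
      rw [mem_degreeLT, degree_lt_iff_coeff_zero] at hhigh
      rw [degree_lt_iff_coeff_zero]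
      intro j hj
      by_cases hjN : j < n + m - k
      · have := congrFun hc ⟨n + m - 1 - k - j, by omega⟩
        rwa [vecMul_subresultantMat hp hq hkm, Fin.val_mk,
          show n + m - 1 - k - (n + m - 1 - k - j) = j by omega] at this
      · exact hhigh j (by omega)
  · rintro ⟨u, hu, v, hv, huv0, huv⟩
    refine ⟨prefixSuffixVec _ (m - k) u v, ?_, funext fun s => ?_⟩
    · intro hc
      have hu0 := revPrefixPoly_prefixSuffixVec ha hu v
      have hv0 := suffixPoly_prefixSuffixVec (m - k) u (hNa ▸ hv)
      simp only [hc, revPrefixPoly, suffixPoly, Pi.zero_apply, map_zero, zero_mul, ite_self,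
        Finset.sum_const_zero] at hu0 hv0
      exact huv0.elim (· hu0.symm) (· hv0.symm)
    · rw [vecMul_subresultantMat hp hq hkm, revPrefixPoly_prefixSuffixVec ha hu,
        suffixPoly_prefixSuffixVec _ _ (hNa ▸ hv), Pi.zero_apply]
      exact coeff_eq_zero_of_degree_lt (huv.trans_le (by exact_mod_cast (by omega)))

end SubresultantKernel

section GcdDegree

variable {K : Type*} [Field K] [DecidableEq K[X]] {p q : K[X]}

theorem subresultant_eq_zero_of_lt_natDegree_gcd (hp : p ≠ 0) (hq : q ≠ 0) {k : ℕ}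
    (hk : k < (EuclideanDomain.gcd p q).natDegree) :
    subresultant p.natDegree q.natDegree p.coeff q.coeff k = 0 := by
  obtain ⟨p₁, q₁, hp₁, hq₁, -⟩ := EuclideanDomain.exists_eq_gcd_mul_isCoprime hq
  set g := EuclideanDomain.gcd p q
  obtain ⟨hg, hp₁0, hn⟩ := natDegree_eq_add_of_eq_mul hp hp₁
  obtain ⟨-, hq₁0, hm⟩ := natDegree_eq_add_of_eq_mul hq hq₁
  refine (subresultant_eq_zero_iff le_rfl le_rfl (by omega) (by omega)).mpr
    ⟨q₁, ?_, -p₁, ?_, Or.inl hq₁0, ?_⟩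
  · rw [mem_degreeLT, ← natDegree_lt_iff_degree_lt hq₁0]
    omega
  · rw [mem_degreeLT, degree_neg, ← natDegree_lt_iff_degree_lt hp₁0]
    omega
  · have : q₁ * p + -p₁ * q = 0 := by rw [hp₁, hq₁]; ring
    rw [this, degree_zero]
    exact WithBot.bot_lt_coe k

theorem subresultant_natDegree_gcd_ne_zero (hp : p ≠ 0) (hq : q ≠ 0) :
    subresultant p.natDegree q.natDegree p.coeff q.coeff
      (EuclideanDomain.gcd p q).natDegree ≠ 0 := by
  obtain ⟨p₁, q₁, hp₁, hq₁, hcop⟩ := EuclideanDomain.exists_eq_gcd_mul_isCoprime hq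
  set g := EuclideanDomain.gcd p q
  obtain ⟨hg, hp₁0, hn⟩ := natDegree_eq_add_of_eq_mul hp hp₁
  obtain ⟨-, hq₁0, hm⟩ := natDegree_eq_add_of_eq_mul hq hq₁
  rw [Ne, subresultant_eq_zero_iff le_rfl le_rfl (by omega) (by omega)]
  rintro ⟨u, hu, v, hv, huv, hdeg⟩
  have hcomb : u * p + v * q = 0 := by
    refine eq_zero_of_dvd_of_degree_lt (p := g) ?_ (by rwa [degree_eq_natDegree hg])
    rw [hp₁, hq₁]
    exact ⟨u * p₁ + v * q₁, by ring⟩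
  have hu0 : u = 0 := by
    have hdvd : q₁ ∣ u * p₁ :=
      ⟨-v, mul_left_cancel₀ hg (by linear_combination hcomb - u * hp₁ - v * hq₁)⟩
    refine eq_zero_of_dvd_of_degree_lt (hcop.symm.dvd_of_dvd_mul_right hdvd) ?_
    rw [mem_degreeLT] at hu
    rw [degree_eq_natDegree hq₁0]
    exact hu.trans_le (by exact_mod_cast (by omega))
  have hv0 : v = 0 := by
    rw [hu0, zero_mul, zero_add] at hcomb
    exact (mul_eq_zero.mp hcomb).resolve_right hq
  exact huv.elim (· hu0) (· hv0)

end GcdDegree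

theorem subresultant_gcd_degree_general
    (p q : Polynomial ℂ) (n m k : ℕ)
    (hn : p.natDegree = n) (hm : q.natDegree = m)
    (hlc : p.leadingCoeff * q.leadingCoeff ≠ 0) :
    (EuclideanDomain.gcd p q).natDegree = k ↔
      ((∀ i < k, subresultant n m (fun j => p.coeff j) (fun j => q.coeff j) i = 0) ∧
        subresultant n m (fun j => p.coeff j) (fun j => q.coeff j) k ≠ 0) := by
  subst hn hm
  obtain ⟨hp, hq⟩ : p ≠ 0 ∧ q ≠ 0 := by
    simpa only [ne_eq, mul_eq_zero, leadingCoeff_eq_zero, not_or] using hlc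
  have hne := subresultant_natDegree_gcd_ne_zero hp hq
  constructor
  · rintro rfl
    exact ⟨fun i hi => subresultant_eq_zero_of_lt_natDegree_gcd hp hq hi, hne⟩
  · rintro ⟨hzero, hk⟩
    rcases lt_trichotomy (EuclideanDomain.gcd p q).natDegree k with h | h | h
    · exact absurd (hzero _ h) hne
    · exact h
    · exact absurd (subresultant_eq_zero_of_lt_natDegree_gcd hp hq h) hk

/-- Let `p, q ∈ ℂ[x]` with degrees `n` and `m` and nonzero
leading coefficients.  For `k ≤ (n+m)/2`, the polynomials `p` and `q` have
exactly `k` common roots counting multiplicity (i.e. `deg gcd(p,q) = k`) iff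
`R₀ = ⋯ = R_{k-1} = 0` and `R_k ≠ 0`. -/
theorem subresultant_gcd_degree
    (p q : Polynomial ℂ) (n m k : ℕ)
    (hn : p.natDegree = n) (hm : q.natDegree = m)
    (hlc : p.leadingCoeff * q.leadingCoeff ≠ 0)
    (hk : k ≤ (n + m) / 2) :
    (EuclideanDomain.gcd p q).natDegree = k ↔
      ((∀ i < k, subresultant n m (fun j => p.coeff j) (fun j => q.coeff j) i = 0) ∧
        subresultant n m (fun j => p.coeff j) (fun j => q.coeff j) k ≠ 0) :=
  subresultant_gcd_degree_general p q n m k hn hm hlc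
end

section
/- Let f, g, h, A, B : ℝ → ℝ be smooth functions and let α ∈ ℝ be such that h(α) ≠ 0 and A(α)² − 4B(α) < 0. Define R(x) = h(x)·(−f(x)² + (A(x)f(x) − B(x)g(x))·g(x)). If there is a nonnegative integer i such that R(α) = R'(α) = ⋯ = R^{(2i)}(α) = 0 (all derivatives of R up to order 2i vanish at α), then also R^{(2i+1)}(α) = 0. -/
open Set Filter

private lemma itdw_eq {φ : ℝ → ℝ} (hφ : ContDiff ℝ (⊤ : ℕ∞) φ) {s : Set ℝ}
    (hs : UniqueDiffOn ℝ s) {x : ℝ} (hx : x ∈ s) (n : ℕ) :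
    iteratedDerivWithin n φ s x = iteratedDeriv n φ x := by
  rw [iteratedDerivWithin_eq_iteratedFDerivWithin, iteratedDeriv_eq_iteratedFDeriv]
  congr 1
  have h' : ContDiff ℝ (⊤ : ℕ∞) φ := hφ.of_le (by simp)
  exact (((contDiff_iff_ftaylorSeries.mp h').hasFTaylorSeriesUpToOn s).eq_iteratedFDerivWithin_of_uniqueDiffOn
    (by exact_mod_cast le_top) hs hx).symm

private lemma key_le (φ : ℝ → ℝ) (hφ : ContDiff ℝ (⊤ : ℕ∞) φ) (α δ : ℝ) (hδ : 0 < δ)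
    (hneg : ∀ x, |x - α| < δ → φ x ≤ 0) (m : ℕ)
    (hvan : ∀ j ≤ 2 * m, iteratedDeriv j φ α = 0) :
    iteratedDeriv (2 * m + 1) φ α ≤ 0 := by
  by_contra hc
  push_neg at hc
  -- continuity of the (2m+1)-st derivative gives positivity nearby
  have hcont : ContinuousAt (iteratedDeriv (2 * m + 1) φ) α :=
    (hφ.continuous_iteratedDeriv (2 * m + 1) (by exact WithTop.coe_le_coe.mpr le_top)).continuousAt
  have hev : ∀ᶠ y in nhds α, 0 < iteratedDeriv (2 * m + 1) φ y :=
    (continuousAt_const.eventually_lt hcont hc)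
  rw [Metric.eventually_nhds_iff] at hev
  obtain ⟨ε, hε, hball⟩ := hev
  set η := min ε δ with hη
  have hηpos : 0 < η := lt_min hε hδ
  set x := α + η / 2 with hxdef
  have hax : α < x := by simp [hxdef]; linarith
  have hudiff := uniqueDiffOn_Icc hax
  have hfOn : ContDiffOn ℝ ((2 * m : ℕ) : WithTop ℕ∞) φ (Icc α x) := (hφ.of_le (by exact WithTop.coe_le_coe.mpr le_top)).contDiffOn
  have hdiff : Differentiable ℝ (iteratedDeriv (2 * m) φ) :=
    hφ.differentiable_iteratedDeriv (2 * m)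
      (lt_of_lt_of_le (b := ((2 * m + 1 : ℕ) : WithTop ℕ∞)) (by exact_mod_cast Nat.lt_succ_self _) (by exact WithTop.coe_le_coe.mpr le_top))
  have hf' : DifferentiableOn ℝ (iteratedDerivWithin (2 * m) φ (Icc α x)) (Ioo α x) := by
    refine (hdiff.differentiableOn).congr fun y hy => ?_
    exact itdw_eq hφ hudiff (Ioo_subset_Icc_self hy) _
  obtain ⟨y, hy, heq⟩ := taylor_mean_remainder_lagrange (n := 2 * m) hax.ne
    (by rwa [uIcc_of_le hax.le]) (by rwa [uIcc_of_le hax.le, uIoo_of_le hax.le])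
  rw [uIcc_of_le hax.le] at heq
  rw [uIoo_of_le hax.le] at hy
  have htp : taylorWithinEval φ (2 * m) (Icc α x) α x = 0 := by
    rw [taylor_within_apply]
    apply Finset.sum_eq_zero
    intro k hk
    rw [itdw_eq hφ hudiff (left_mem_Icc.2 hax.le), hvan k (Nat.lt_succ_iff.mp
      (Finset.mem_range.mp hk))]
    simp
  rw [htp, sub_zero, itdw_eq hφ hudiff (Ioo_subset_Icc_self hy)] at heq
  -- φ x is nonpositive
  have hxδ : |x - α| < δ := by
    rw [hxdef]
    rw [abs_of_pos (by linarith)]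
    have : η ≤ δ := min_le_right _ _
    linarith
  have hφx : φ x ≤ 0 := hneg x hxδ
  -- the derivative at y is positive
  have hyε : dist y α < ε := by
    rw [Real.dist_eq, abs_of_pos (by linarith [hy.1])]
    have h1 : y < x := hy.2
    have : η ≤ ε := min_le_left _ _
    have := hy.1
    simp only [hxdef] at h1
    linarith
  have hdy : 0 < iteratedDeriv (2 * m + 1) φ y := hball hyε
  have hpow : 0 < (x - α) ^ (2 * m + 1) := pow_pos (by linarith) _
  have hfac : (0:ℝ) < (Nat.factorial (2 * m + 1) : ℝ) := by
    exact_mod_cast Nat.factorial_pos _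
  have : 0 < φ x := by
    rw [heq]
    exact div_pos (mul_pos hdy hpow) hfac
  linarith

private lemma key (φ : ℝ → ℝ) (hφ : ContDiff ℝ (⊤ : ℕ∞) φ) (α δ : ℝ) (hδ : 0 < δ)
    (hneg : ∀ x, |x - α| < δ → φ x ≤ 0) (m : ℕ)
    (hvan : ∀ j ≤ 2 * m, iteratedDeriv j φ α = 0) :
    iteratedDeriv (2 * m + 1) φ α = 0 := by
  have h1 := key_le φ hφ α δ hδ hneg m hvan
  -- reflected function
  set ψ : ℝ → ℝ := fun t => φ (-(t + (-(2 * α)))) with hψ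
  have hψc : ContDiff ℝ (⊤ : ℕ∞) ψ := hφ.comp (by fun_prop)
  have hψd : ∀ n, iteratedDeriv n ψ α = (-1 : ℝ) ^ n * iteratedDeriv n φ α := by
    intro n
    have h2 : iteratedDeriv n ψ α
        = iteratedDeriv n (fun u => φ (-u)) (α + -(2 * α)) := by
      rw [hψ, iteratedDeriv_comp_add_const n (fun u => φ (-u)) (-(2 * α))]
    rw [h2]
    have h3 := iteratedDeriv_comp_neg n φ (α + -(2 * α))
    rw [h3]
    have : -(α + -(2 * α)) = α := by ring
    rw [this, smul_eq_mul]
  have hψneg : ∀ x, |x - α| < δ → ψ x ≤ 0 := by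
    intro x hx
    apply hneg
    have : -(x + -(2 * α)) - α = -(x - α) := by ring
    rw [this, abs_neg]
    exact hx
  have hψvan : ∀ j ≤ 2 * m, iteratedDeriv j ψ α = 0 := by
    intro j hj
    rw [hψd j, hvan j hj, mul_zero]
  have h2 := key_le ψ hψc α δ hδ hψneg m hψvan
  rw [hψd] at h2
  have hpow : (-1 : ℝ) ^ (2 * m + 1) = -1 := by
    rw [pow_succ, pow_mul]
    norm_num
  rw [hpow] at h2
  linarith

/-- Let `f, g, h, A, B : ℝ → ℝ` be smooth, `α ∈ ℝ` with
`h α ≠ 0` and `A α ² − 4 B α < 0`, and let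
`R x = h x · (− f x ² + (A x · f x − B x · g x) · g x)`.
If all derivatives of `R` up to order `2i` vanish at `α`, then also
`R^{(2i+1)}(α) = 0`. -/
theorem derivative_odd_order_vanishes
    (f g h A B : ℝ → ℝ)
    (hf : ContDiff ℝ (⊤ : ℕ∞) f) (hg : ContDiff ℝ (⊤ : ℕ∞) g) (hh : ContDiff ℝ (⊤ : ℕ∞) h)
    (hA : ContDiff ℝ (⊤ : ℕ∞) A) (hB : ContDiff ℝ (⊤ : ℕ∞) B)
    (α : ℝ) (hhα : h α ≠ 0) (hAB : (A α) ^ 2 - 4 * B α < 0)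
    (R : ℝ → ℝ)
    (hR : R = fun x => h x * (-(f x) ^ 2 + (A x * f x - B x * g x) * g x))
    (i : ℕ)
    (hvanish : ∀ j ≤ 2 * i, iteratedDeriv j R α = 0) :
    iteratedDeriv (2 * i + 1) R α = 0 := by
  have hRc : ContDiff ℝ (⊤ : ℕ∞) R := by rw [hR]; fun_prop
  -- find a neighborhood where h α * h x > 0 and discriminant < 0
  have hev1 : ∀ᶠ x in nhds α, 0 < h α * h x := by
    have : (0 : ℝ) < h α * h α := mul_self_pos.2 hhα
    exact continuousAt_const.eventually_lt
      ((hh.continuous.continuousAt).const_mul _) this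
  have hev2 : ∀ᶠ x in nhds α, A x ^ 2 - 4 * B x < 0 := by
    have hcont : ContinuousAt (fun x => A x ^ 2 - 4 * B x) α :=
      ((hA.continuous.pow 2).sub (continuous_const.mul hB.continuous)).continuousAt
    exact hcont.eventually_lt continuousAt_const hAB
  obtain ⟨δ, hδ, hball⟩ := Metric.eventually_nhds_iff.mp (hev1.and hev2)
  -- S = h α • R is nonpositive near α
  set S : ℝ → ℝ := fun x => h α * R x with hS
  have hSc : ContDiff ℝ (⊤ : ℕ∞) S := contDiff_const.mul hRc
  have hSneg : ∀ x, |x - α| < δ → S x ≤ 0 := by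
    intro x hx
    obtain ⟨hx1, hx2⟩ := hball (by rwa [Real.dist_eq])
    have hQ : -(f x) ^ 2 + (A x * f x - B x * g x) * g x ≤ 0 := by
      nlinarith [sq_nonneg (2 * f x - A x * g x), sq_nonneg (g x)]
    rw [hS, hR]
    simp only
    nlinarith
  have hSd : ∀ n, iteratedDeriv n S α = h α * iteratedDeriv n R α := by
    intro n
    rw [hS]
    rw [← iteratedDerivWithin_univ, ← iteratedDerivWithin_univ]
    exact iteratedDerivWithin_const_mul (Set.mem_univ α) uniqueDiffOn_univ (h α)
      ((hRc.of_le (by exact_mod_cast le_top)).contDiffWithinAt)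
  have hSvan : ∀ j ≤ 2 * i, iteratedDeriv j S α = 0 := by
    intro j hj
    rw [hSd, hvanish j hj, mul_zero]
  have := key S hSc α δ hδ hSneg i hSvan
  rw [hSd] at this
  exact (mul_eq_zero.mp this).resolve_left hhα
end

section
/- Let p(x,y) = M(x)y² + a(x)y + b(x) and q(x,y) = N(x)y³ + c(x)y² + d(x)y + e(x) be polynomials in ℝ[x,y], where M,a,b,N,c,d,e ∈ ℝ[x]. Let R₀(x) be the 0-subresultant in y of p and q (treating them as polynomials in y of formal degrees 2 and 3), write R₀(x) = b₀ + b₁x + ⋯ + b_l x^l with b_l ≠ 0 its leading coefficient. Suppose (i) R₀(x) has no common real zeros with N(x), and (ii) there exists z ∈ ℝ with b_l·R₀(z) < 0. Then there exists (α,β) ∈ ℝ² such that p(α,β) = q(α,β) = 0. -/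
/-
If `p` and `q` had no common real zero, `R₀` could not change sign. At a zero `α` of `R₀`
we have `N(α) ≠ 0`, and `p(α, ·)` cannot have a real root: writing
`p(α, y) = M(α)(y - β₁)(y - β₂)` gives `R₀(α) = -M(α)³ q(α, β₁) q(α, β₂)` (with analogous
formulas when `p(α, ·)` degenerates), so a real root would be a common zero. Hence the
discriminant of `p` is negative near `α`, and there
`4 M³ R₀ = disc · U² - (2 M V - a U)² ≤ 0`, so `R₀` keeps a weak sign near `α`. Since `ℝ`
is connected, a nonzero polynomial with this property cannot take both signs; but
`b_l R₀(z) < 0` while `b_l R₀(x) > 0` for large `x`.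
-/

open Polynomial Filter Topology Set

section QuadCubicRes

variable {R : Type*} [CommRing R]

def quadCubicRes (m a b n c d e : R) : R :=
  subresultant 2 3
    (fun i => if i = 0 then b else if i = 1 then a else if i = 2 then m else 0)
    (fun i => if i = 0 then e else if i = 1 then d else if i = 2 then c
      else if i = 3 then n else 0) 0

theorem quadCubicRes_eq (m a b n c d e : R) :
    quadCubicRes m a b n c d e =
      -b^3*n^2 + a*b^2*n*c - a^2*b*n*d + a^3*n*e - m*b^2*c^2 + 2*m*b^2*n*d + m*a*b*c*d
        - 3*m*a*b*n*e - m*a^2*c*e - m^2*b*d^2 + 2*m^2*b*c*e + m^2*a*d*e - m^3*e^2 := by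
  have h : quadCubicRes m a b n c d e =
      Matrix.det !![m, a, b, 0, 0;
                    0, m, a, b, 0;
                    0, 0, m, a, b;
                    0, n, c, d, e;
                    n, c, d, e, 0] := by
    unfold quadCubicRes subresultant
    congr 1
    ext i j
    fin_cases i <;> fin_cases j <;> rfl
  rw [h]
  simp [Matrix.det_succ_row_zero, Fin.sum_univ_succ]
  simp [Fin.succAbove, Fin.lt_def]
  ring

theorem RingHom.map_quadCubicRes {S : Type*} [CommRing S] (f : R →+* S) (m a b n c d e : R) :
    f (quadCubicRes m a b n c d e) =
      quadCubicRes (f m) (f a) (f b) (f n) (f c) (f d) (f e) := by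
  simp only [quadCubicRes_eq, map_add, map_sub, map_mul, map_pow, map_neg, map_ofNat]

theorem quadCubicRes_of_roots (m β₁ β₂ n c d e : R) :
    quadCubicRes m (-(m * (β₁ + β₂))) (m * β₁ * β₂) n c d e =
      -m ^ 3 * (n * β₁ ^ 3 + c * β₁ ^ 2 + d * β₁ + e) *
        (n * β₂ ^ 3 + c * β₂ ^ 2 + d * β₂ + e) := by
  rw [quadCubicRes_eq]; ring

theorem quadCubicRes_zero_of_root (a β n c d e : R) :
    quadCubicRes 0 a (-(a * β)) n c d e = n * a ^ 3 * (n * β ^ 3 + c * β ^ 2 + d * β + e) := by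
  rw [quadCubicRes_eq]; ring

theorem quadCubicRes_zero_zero (b n c d e : R) :
    quadCubicRes 0 0 b n c d e = -(b ^ 3 * n ^ 2) := by
  rw [quadCubicRes_eq]; ring

/-- `U y + V` is the remainder of `m² q` modulo `p = m y² + a y + b`. -/
theorem four_mul_pow_three_mul_quadCubicRes (m a b n c d e : R) :
    let U := m ^ 2 * d - a * m * c + a ^ 2 * n - b * m * n
    let V := m ^ 2 * e - b * m * c + a * b * n
    4 * m ^ 3 * quadCubicRes m a b n c d e = discrim m a b * U ^ 2 - (2 * m * V - a * U) ^ 2 := by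
  rw [quadCubicRes_eq, discrim]; ring

end QuadCubicRes

theorem ne_zero_of_discrim_neg {m a b : ℝ} (hD : discrim m a b < 0) : m ≠ 0 := by
  rintro rfl
  rw [discrim] at hD
  nlinarith

theorem mul_quadCubicRes_nonpos {m a b : ℝ} (n c d e : ℝ) (hD : discrim m a b < 0) :
    m * quadCubicRes m a b n c d e ≤ 0 := by
  have hm := ne_zero_of_discrim_neg hD
  have h := four_mul_pow_three_mul_quadCubicRes m a b n c d e
  refine nonpos_of_mul_nonpos_right (a := 4 * m ^ 2) ?_ (by positivity)
  nlinarith [sq_nonneg (m ^ 2 * d - a * m * c + a ^ 2 * n - b * m * n),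
    sq_nonneg (2 * m * (m ^ 2 * e - b * m * c + a * b * n)
      - a * (m ^ 2 * d - a * m * c + a ^ 2 * n - b * m * n))]

theorem Polynomial.exists_isRoot_of_odd_natDegree {P : ℝ[X]} (h : Odd P.natDegree) :
    ∃ x, P.IsRoot x := by
  wlog hlc : 0 < P.leadingCoeff generalizing P
  · have hP : P ≠ 0 := by rintro rfl; simp at h
    have hlc' : 0 < (-P).leadingCoeff := by
      rw [leadingCoeff_neg, neg_pos]
      exact (not_lt.mp hlc).lt_of_ne (leadingCoeff_ne_zero.mpr hP)
    obtain ⟨x, hx⟩ := this (by rwa [natDegree_neg]) hlc'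
    exact ⟨x, by simpa using hx⟩
  have hdeg : 0 < P.degree := natDegree_pos_iff_degree_pos.mp h.pos
  have hQlc : (P.comp (-X)).leadingCoeff = -P.leadingCoeff := by
    rw [leadingCoeff_comp (by simp)]; simp [h.neg_one_pow]
  have hQdeg : 0 < (P.comp (-X)).degree := by
    rw [← natDegree_pos_iff_degree_pos, natDegree_comp]; simpa using h.pos
  obtain ⟨u, hu⟩ := ((P.comp (-X)).tendsto_atBot_of_leadingCoeff_nonpos hQdeg
    (by linarith)).eventually_le_atBot 0 |>.exists
  obtain ⟨v, hv⟩ := (P.tendsto_atTop_of_leadingCoeff_nonneg hdeg hlc.le).eventually_ge_atTop 0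
    |>.exists
  exact mem_range_of_exists_le_of_exists_ge P.continuous ⟨-u, by simpa using hu⟩ ⟨v, hv⟩

theorem exists_cubic_eq_zero {n : ℝ} (c d e : ℝ) (hn : n ≠ 0) :
    ∃ y, n * y ^ 3 + c * y ^ 2 + d * y + e = 0 := by
  obtain ⟨y, hy⟩ := (C n * X ^ 3 + C c * X ^ 2 + C d * X + C e).exists_isRoot_of_odd_natDegree
    (by rw [natDegree_cubic hn]; decide)
  exact ⟨y, by simpa using hy⟩

theorem exists_quadratic_factor {m : ℝ} (a b : ℝ) (hm : m ≠ 0) (hD : 0 ≤ discrim m a b) :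
    ∃ β₁ β₂, a = -(m * (β₁ + β₂)) ∧ b = m * β₁ * β₂ := by
  obtain ⟨β₁, hβ₁⟩ :=
    exists_quadratic_eq_zero hm ⟨√(discrim m a b), (Real.mul_self_sqrt hD).symm⟩
  refine ⟨β₁, -a / m - β₁, ?_, ?_⟩
  · field_simp; ring
  · field_simp
    linear_combination hβ₁

theorem exists_common_root_of_quadCubicRes_eq_zero {m a b n c d e : ℝ} (hn : n ≠ 0)
    (hD : 0 ≤ discrim m a b) (hres : quadCubicRes m a b n c d e = 0) :
    ∃ β, m * β ^ 2 + a * β + b = 0 ∧ n * β ^ 3 + c * β ^ 2 + d * β + e = 0 := by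
  by_cases hm : m = 0
  · subst hm
    by_cases ha : a = 0
    · subst ha
      rw [quadCubicRes_zero_zero] at hres
      have hb : b = 0 := by simpa [hn] using hres
      obtain ⟨β, hβ⟩ := exists_cubic_eq_zero c d e hn
      exact ⟨β, by simp [hb], hβ⟩
    · obtain ⟨β, rfl⟩ : ∃ β, b = -(a * β) := ⟨-b / a, by field_simp⟩
      rw [quadCubicRes_zero_of_root] at hres
      exact ⟨β, by ring, by simpa [hn, ha] using hres⟩
  · obtain ⟨β₁, β₂, rfl, rfl⟩ := exists_quadratic_factor a b hm hD
    rw [quadCubicRes_of_roots] at hres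
    rcases mul_eq_zero.mp hres with h | h
    · exact ⟨β₁, by ring, by simpa [hm] using h⟩
    · exact ⟨β₂, by ring, h⟩

theorem Polynomial.exists_leadingCoeff_mul_eval_pos {P : ℝ[X]} (hP : P ≠ 0) :
    ∃ x, 0 < P.leadingCoeff * P.eval x := by
  have hlc : P.leadingCoeff ≠ 0 := leadingCoeff_ne_zero.mpr hP
  by_cases hdeg : 0 < P.degree
  · have htend := (C P.leadingCoeff * P).tendsto_atTop_of_leadingCoeff_nonneg
      (by rwa [degree_C_mul hlc]) (by simpa using mul_self_nonneg _)
    obtain ⟨x, hx⟩ := (htend.eventually_gt_atTop 0).exists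
    exact ⟨x, by simpa using hx⟩
  · refine ⟨0, ?_⟩
    rw [eq_C_of_degree_le_zero (not_lt.mp hdeg)] at hlc ⊢
    simpa [mul_self_pos] using hlc

theorem Polynomial.exists_eval_mul_eval_neg {P : ℝ[X]} {z : ℝ}
    (hz : P.leadingCoeff * P.eval z < 0) : ∃ w, P.eval z * P.eval w < 0 := by
  obtain ⟨w, hw⟩ := exists_leadingCoeff_mul_eval_pos (P := P) (by rintro rfl; simp at hz)
  have h := mul_neg_of_neg_of_pos hz hw
  rw [mul_mul_mul_comm, ← sq] at h
  exact ⟨w, neg_of_mul_neg_right h (sq_nonneg _)⟩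

theorem Polynomial.eq_zero_of_eventually_eval_eq_zero {𝕜 : Type*} [NontriviallyNormedField 𝕜]
    {P : 𝕜[X]} {x : 𝕜} (h : ∀ᶠ y in 𝓝 x, P.eval y = 0) : P = 0 :=
  P.eq_zero_of_infinite_isRoot (infinite_of_mem_nhds x h)

theorem eventually_nonpos_or_eventually_nonneg_of_mul_nonpos {X : Type*} [TopologicalSpace X]
    {f g : X → ℝ} {x : X} (hg : ContinuousAt g x) (hgx : g x ≠ 0)
    (h : ∀ᶠ y in 𝓝 x, g y * f y ≤ 0) :
    (∀ᶠ y in 𝓝 x, f y ≤ 0) ∨ ∀ᶠ y in 𝓝 x, 0 ≤ f y := by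
  rcases hgx.lt_or_gt with hneg | hpos
  · right
    filter_upwards [h, hg.eventually (eventually_lt_nhds hneg)] with y hy hgy
    exact nonneg_of_mul_nonpos_right hy hgy
  · left
    filter_upwards [h, hg.eventually (eventually_gt_nhds hpos)] with y hy hgy
    exact nonpos_of_mul_nonpos_right hy hgy

theorem exists_eventually_eq_zero_of_mul_neg {X : Type*} [TopologicalSpace X]
    [PreconnectedSpace X] {f : X → ℝ} (hf : Continuous f)
    (hloc : ∀ x, f x = 0 → (∀ᶠ y in 𝓝 x, f y ≤ 0) ∨ ∀ᶠ y in 𝓝 x, 0 ≤ f y)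
    {u v : X} (huv : f u * f v < 0) : ∃ x, ∀ᶠ y in 𝓝 x, f y = 0 := by
  set U := {x | ∀ᶠ y in 𝓝 x, f y ≤ 0}
  set V := {x | ∀ᶠ y in 𝓝 x, 0 ≤ f y}
  have hU : ∀ x, f x < 0 → x ∈ U := fun x hx =>
    (hf.continuousAt.eventually (eventually_lt_nhds hx)).mono fun _ => le_of_lt
  have hV : ∀ x, 0 < f x → x ∈ V := fun x hx =>
    (hf.continuousAt.eventually (eventually_gt_nhds hx)).mono fun _ => le_of_lt
  have hcover : U ∪ V = univ := eq_univ_of_forall fun x => by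
    rcases lt_trichotomy (f x) 0 with h | h | h
    exacts [Or.inl (hU x h), hloc x h, Or.inr (hV x h)]
  have hUV : U.Nonempty ∧ V.Nonempty := by
    rcases mul_neg_iff.mp huv with ⟨hu, hv⟩ | ⟨hu, hv⟩
    exacts [⟨⟨v, hU v hv⟩, ⟨u, hV u hu⟩⟩, ⟨⟨u, hU u hu⟩, ⟨v, hV v hv⟩⟩]
  obtain ⟨x, hxU, hxV⟩ := nonempty_inter isOpen_setOfPred_eventually_nhds
    isOpen_setOfPred_eventually_nhds hcover hUV.1 hUV.2
  exact ⟨x, (hxU.and hxV).mono fun _ h => le_antisymm h.1 h.2⟩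

/-- Let `p(x,y) = M(x)y² + a(x)y + b(x)` and
`q(x,y) = N(x)y³ + c(x)y² + d(x)y + e(x)` with `M,a,b,N,c,d,e ∈ ℝ[x]`, and let
`R₀(x)` denote the `0`-subresultant of `p` and `q` in `y` (formal degrees `2`
and `3`), with leading coefficient `b_l`.  If `R₀` and `N` have no common real
zero, and `b_l · R₀(z) < 0` for some `z ∈ ℝ`, then `p` and `q` have a common
real zero `(α,β)`. -/
theorem common_zero_deg2_deg3
    (M a b N c d e : Polynomial ℝ)
    (R₀ : Polynomial ℝ)
    (hR₀ : R₀ = subresultant 2 3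
      (fun i => if i = 0 then b else if i = 1 then a else if i = 2 then M else 0)
      (fun i => if i = 0 then e else if i = 1 then d else if i = 2 then c
        else if i = 3 then N else 0) 0)
    (hcommon : ∀ x : ℝ, ¬(R₀.eval x = 0 ∧ N.eval x = 0))
    (hneg : ∃ z : ℝ, R₀.leadingCoeff * R₀.eval z < 0) :
    ∃ α β : ℝ,
      M.eval α * β ^ 2 + a.eval α * β + b.eval α = 0 ∧
      N.eval α * β ^ 3 + c.eval α * β ^ 2 + d.eval α * β + e.eval α = 0 := by
  by_contra! hnone
  obtain ⟨z, hz⟩ := hneg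
  have hR₀ne : R₀ ≠ 0 := by rintro rfl; simp at hz
  have heval (x : ℝ) : R₀.eval x = quadCubicRes (M.eval x) (a.eval x) (b.eval x) (N.eval x)
      (c.eval x) (d.eval x) (e.eval x) := by
    rw [hR₀]; exact (evalRingHom x).map_quadCubicRes M a b N c d e
  have hloc (x : ℝ) (hx : R₀.eval x = 0) :
      (∀ᶠ y in 𝓝 x, R₀.eval y ≤ 0) ∨ ∀ᶠ y in 𝓝 x, 0 ≤ R₀.eval y := by
    have hD : discrim (M.eval x) (a.eval x) (b.eval x) < 0 := by
      by_contra! hD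
      obtain ⟨β, hp, hq⟩ := exists_common_root_of_quadCubicRes_eq_zero
        (fun hN => hcommon x ⟨hx, hN⟩) hD (heval x ▸ hx)
      exact hnone x β hp hq
    refine eventually_nonpos_or_eventually_nonneg_of_mul_nonpos M.continuousAt
      (ne_zero_of_discrim_neg hD) ?_
    have hDcont : Continuous fun y => discrim (M.eval y) (a.eval y) (b.eval y) := by
      unfold discrim; fun_prop
    filter_upwards [hDcont.continuousAt.eventually (eventually_lt_nhds hD)] with y hy
    rw [heval]
    exact mul_quadCubicRes_nonpos _ _ _ _ hy
  obtain ⟨w, hsign⟩ := exists_eval_mul_eval_neg hz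
  obtain ⟨x, hx⟩ := exists_eventually_eq_zero_of_mul_neg R₀.continuous hloc hsign
  exact hR₀ne (eq_zero_of_eventually_eval_eq_zero hx)
end

section
/- Let p(x,y) = M(x)y² + a(x)y + b(x) and q(x,y) = N(x)y² + c(x)y + d(x) be polynomials in ℝ[x,y]. Let R₀(x) and R₁(x) be the 0- and 1-subresultants in y of p and q (as polynomials in y of formal degree 2), and let b_l be the leading coefficient of R₀(x). (Part 1) If (i) R₀(x) has no common real zeros with M(x) and none with N(x), and (ii) b_l > 0 and there exists z ∈ ℝ with R₁(z) = 0 and M(z)·N(z) ≠ 0, then there exists (α,β) ∈ ℝ² with p(α,β) = q(α,β) = 0. (Part 2) If instead of (i) one assumes (i′) R₀(x) has no common real zeros with N(x) and there exists α ∈ ℝ with R₀(α) = M(α) = 0, while keeping (ii), then there exists β ∈ ℝ with p(α,β) = q(α,β) = 0 if and only if a(α) ≠ 0, or p(α,y) is identically zero as a polynomial in y and c(α)² − 4N(α)d(α) ≥ 0. -/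
open Polynomial Filter Topology

section QuadraticResultant

variable {K : Type*}

-- The `0`-subresultant of `m y² + a y + b` and `n y² + c y + d`: minus their resultant.
def quadRes [CommRing K] (m a b n c d : K) : K :=
  -(m * d - n * b) ^ 2 + (m * c - a * n) * (a * d - b * c)

theorem map_quadRes {S F : Type*} [CommRing K] [CommRing S] [FunLike F K S] [RingHomClass F K S]
    (f : F) (m a b n c d : K) :
    f (quadRes m a b n c d) = quadRes (f m) (f a) (f b) (f n) (f c) (f d) := by
  simp [quadRes]

theorem subresultant_two_two_one [CommRing K] (P Q : ℕ → K) :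
    subresultant 2 2 P Q 1 = P 2 * Q 1 - P 1 * Q 2 := by
  show Matrix.det (_ : Matrix (Fin 2) (Fin 2) K) = _
  simp [Matrix.det_fin_two, sylvesterMat]

theorem subresultant_two_two_zero [CommRing K] (P Q : ℕ → K) :
    subresultant 2 2 P Q 0 = quadRes (P 2) (P 1) (P 0) (Q 2) (Q 1) (Q 0) := by
  show Matrix.det (_ : Matrix (Fin 4) (Fin 4) K) = _
  simp [Matrix.det_succ_row_zero, Fin.sum_univ_succ, sylvesterMat, Fin.succAbove, quadRes]
  ring

theorem quadRes_nonpos_of_discrim_neg [Field K] [LinearOrder K] [IsStrictOrderedRing K]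
    {m a b n c d : K} (h : discrim m a b < 0) : quadRes m a b n c d ≤ 0 := by
  have hm : m ≠ 0 := by
    rintro rfl
    exact (sq_nonneg a).not_gt (by simpa [discrim] using h)
  have key : 4 * m ^ 2 * quadRes m a b n c d =
      -(2 * m * (m * d - n * b) - a * (m * c - a * n)) ^ 2
        + discrim m a b * (m * c - a * n) ^ 2 := by
    simp only [quadRes, discrim]
    ring
  refine nonpos_of_mul_nonpos_right ?_ (by positivity : (0 : K) < 4 * m ^ 2)
  rw [key]
  nlinarith [sq_nonneg (2 * m * (m * d - n * b) - a * (m * c - a * n)),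
    sq_nonneg (m * c - a * n)]

theorem exists_common_root_of_quadRes_eq_zero_of_sub_ne_zero [Field K] {m a b n c d : K}
    (h : quadRes m a b n c d = 0) (hA : m * c - a * n ≠ 0) :
    ∃ β, m * β ^ 2 + a * β + b = 0 ∧ n * β ^ 2 + c * β + d = 0 := by
  unfold quadRes at h
  set β := -(m * d - n * b) / (m * c - a * n)
  have hβ : β * (m * c - a * n) = -(m * d - n * b) := div_mul_cancel₀ _ hA
  refine ⟨β, ?_, ?_⟩ <;> refine (mul_eq_zero.mp ?_).resolve_left (pow_ne_zero 2 hA)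
  · linear_combination
      (m * (β * (m * c - a * n) - (m * d - n * b)) + a * (m * c - a * n)) * hβ - m * h
  · linear_combination
      (n * (β * (m * c - a * n) - (m * d - n * b)) + c * (m * c - a * n)) * hβ - n * h

theorem exists_common_root_of_quadRes_eq_zero_of_discrim_nonneg {m a b n c d : ℝ}
    (hm : m ≠ 0) (hD : 0 ≤ discrim m a b) (h : quadRes m a b n c d = 0) :
    ∃ β, m * β ^ 2 + a * β + b = 0 ∧ n * β ^ 2 + c * β + d = 0 := by
  by_cases hA : m * c - a * n = 0
  · have hB : m * d - n * b = 0 := by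
      rw [quadRes, hA, zero_mul, add_zero, neg_eq_zero] at h
      exact pow_eq_zero_iff two_ne_zero |>.mp h
    obtain ⟨β, hβ⟩ :=
      exists_quadratic_eq_zero hm ⟨√(discrim m a b), (Real.mul_self_sqrt hD).symm⟩
    rw [← sq] at hβ
    refine ⟨β, hβ, (mul_eq_zero.mp ?_).resolve_left hm⟩
    linear_combination n * hβ + β * hA + hB
  · exact exists_common_root_of_quadRes_eq_zero_of_sub_ne_zero h hA

theorem exists_common_root_iff_of_quadRes_eq_zero_of_eq_zero {m a b n c d : ℝ} (hm : m = 0)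
    (hn : n ≠ 0) (h : quadRes m a b n c d = 0) :
    (∃ β, m * β ^ 2 + a * β + b = 0 ∧ n * β ^ 2 + c * β + d = 0) ↔
      a ≠ 0 ∨ (m = 0 ∧ a = 0 ∧ b = 0) ∧ 0 ≤ discrim n c d := by
  subst hm
  have key : n * b ^ 2 + a ^ 2 * d - a * b * c = 0 := by
    refine (mul_eq_zero.mp ?_).resolve_left hn
    unfold quadRes at h
    linear_combination -h
  constructor
  · rintro ⟨β, -, hq⟩
    rcases ne_or_eq a 0 with ha | rfl
    · exact Or.inl ha
    have hb : b = 0 := by simpa [hn] using key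
    refine Or.inr ⟨⟨rfl, rfl, hb⟩, ?_⟩
    rw [discrim_eq_sq_of_quadratic_eq_zero (x := β) (by linear_combination hq)]
    positivity
  · rintro (ha | ⟨⟨-, rfl, rfl⟩, hD⟩)
    · refine ⟨-b / a, by field_simp; ring, ?_⟩
      field_simp
      linear_combination key
    · obtain ⟨β, hβ⟩ :=
        exists_quadratic_eq_zero hn ⟨√(discrim n c d), (Real.mul_self_sqrt hD).symm⟩
      exact ⟨β, by ring, by linear_combination hβ⟩

end QuadraticResultant

namespace Polynomial

variable {f : ℝ[X]}

theorem exists_isRoot_ge_of_eval_nonpos_of_leadingCoeff_pos {y : ℝ} (hy : f.eval y ≤ 0)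
    (hf : 0 < f.leadingCoeff) : ∃ r, y ≤ r ∧ f.IsRoot r := by
  have hdeg : 0 < f.degree := by
    by_contra! hd
    rw [eq_C_of_degree_le_zero hd] at hy hf
    simp only [eval_C, leadingCoeff_C] at hy hf
    linarith
  have htop := f.tendsto_atTop_of_leadingCoeff_nonneg hdeg hf.le
  obtain ⟨w, hw, hyw⟩ := (htop.eventually_gt_atTop 0 |>.and (eventually_ge_atTop y)).exists
  obtain ⟨r, hr, hroot⟩ := intermediate_value_Icc hyw f.continuousOn ⟨hy, hw.le⟩
  exact ⟨r, hr.1, hroot⟩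

theorem exists_isRoot_forall_gt_eval_pos {y : ℝ} (hy : f.eval y ≤ 0) (hf : 0 < f.leadingCoeff) :
    ∃ x₀, f.IsRoot x₀ ∧ ∀ x > x₀, 0 < f.eval x := by
  have hf0 : f ≠ 0 := leadingCoeff_ne_zero.mp hf.ne'
  obtain ⟨r, -, hr⟩ := exists_isRoot_ge_of_eval_nonpos_of_leadingCoeff_pos hy hf
  have hne : f.roots.toFinset.Nonempty := ⟨r, by simpa [hf0] using hr⟩
  refine ⟨f.roots.toFinset.max' hne, by simpa [hf0] using f.roots.toFinset.max'_mem hne, ?_⟩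
  intro x hx
  by_contra! hfx
  obtain ⟨s, hxs, hs⟩ := exists_isRoot_ge_of_eval_nonpos_of_leadingCoeff_pos hfx hf
  exact (hx.trans_le hxs).not_ge (Finset.le_max' _ s (by simpa [hf0] using hs))

end Polynomial

theorem discrim_nonneg_of_forall_gt_quadRes_pos {m a b n c d : ℝ → ℝ} {x₀ : ℝ}
    (hm : ContinuousAt m x₀) (ha : ContinuousAt a x₀) (hb : ContinuousAt b x₀)
    (hpos : ∀ x > x₀, 0 < quadRes (m x) (a x) (b x) (n x) (c x) (d x)) :
    0 ≤ discrim (m x₀) (a x₀) (b x₀) := by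
  by_contra! hD
  have hcont : ContinuousAt (fun x => discrim (m x) (a x) (b x)) x₀ := by
    unfold discrim; fun_prop
  obtain ⟨x, hxD, hx⟩ :=
    ((hcont.eventually_lt continuousAt_const hD).filter_mono nhdsWithin_le_nhds
      |>.and (self_mem_nhdsWithin : Set.Ioi x₀ ∈ 𝓝[>] x₀)).exists
  exact (hpos x hx).not_ge (quadRes_nonpos_of_discrim_neg hxD)

/-- Let `p(x,y) = M(x)y² + a(x)y + b(x)` and
`q(x,y) = N(x)y² + c(x)y + d(x)`, with `R₀(x)`, `R₁(x)` their `0`- and `1`-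
subresultants in `y` (formal degree `2`) and `b_l` the leading coefficient of
`R₀`.
Part 1: if `R₀` has no common real zero with `M` nor with `N`, `b_l > 0`, and
there is `z` with `R₁(z) = 0` and `M(z)·N(z) ≠ 0`, then `p` and `q` have a
common real zero.
Part 2: if instead `R₀` has no common real zero with `N` and there is `α` with
`R₀(α) = M(α) = 0` (keeping the other hypotheses), then there is `β` with
`p(α,β) = q(α,β) = 0` iff `a(α) ≠ 0`, or `p(α,·) ≡ 0` and
`c(α)² − 4N(α)d(α) ≥ 0`. -/
theorem common_zero_deg2_deg2_subres1
    (M a b N c d : Polynomial ℝ)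
    (R₀ R₁ : Polynomial ℝ)
    (hR₀ : R₀ = subresultant 2 2
      (fun i => if i = 0 then b else if i = 1 then a else if i = 2 then M else 0)
      (fun i => if i = 0 then d else if i = 1 then c else if i = 2 then N else 0) 0)
    (hR₁ : R₁ = subresultant 2 2
      (fun i => if i = 0 then b else if i = 1 then a else if i = 2 then M else 0)
      (fun i => if i = 0 then d else if i = 1 then c else if i = 2 then N else 0) 1)
    (hpos : R₀.leadingCoeff > 0)
    (hz : ∃ z : ℝ, R₁.eval z = 0 ∧ M.eval z * N.eval z ≠ 0) :
    (((∀ x : ℝ, ¬(R₀.eval x = 0 ∧ M.eval x = 0)) ∧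
      (∀ x : ℝ, ¬(R₀.eval x = 0 ∧ N.eval x = 0))) →
      ∃ α β : ℝ,
        M.eval α * β ^ 2 + a.eval α * β + b.eval α = 0 ∧
        N.eval α * β ^ 2 + c.eval α * β + d.eval α = 0) ∧
    (∀ α : ℝ,
      ((∀ x : ℝ, ¬(R₀.eval x = 0 ∧ N.eval x = 0)) ∧
        R₀.eval α = 0 ∧ M.eval α = 0) →
      ((∃ β : ℝ,
          M.eval α * β ^ 2 + a.eval α * β + b.eval α = 0 ∧
          N.eval α * β ^ 2 + c.eval α * β + d.eval α = 0) ↔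
        (a.eval α ≠ 0 ∨
          ((M.eval α = 0 ∧ a.eval α = 0 ∧ b.eval α = 0) ∧
            (c.eval α) ^ 2 - 4 * N.eval α * d.eval α ≥ 0)))) := by
  have hR₀' : R₀ = quadRes M a b N c d := by rw [hR₀, subresultant_two_two_zero]; simp
  have hR₁' : R₁ = M * c - a * N := by rw [hR₁, subresultant_two_two_one]; simp
  have eval_R₀ (x : ℝ) : R₀.eval x = quadRes (M.eval x) (a.eval x) (b.eval x)
      (N.eval x) (c.eval x) (d.eval x) := by
    rw [hR₀', ← coe_evalRingHom, map_quadRes]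
  constructor
  · rintro ⟨hM, -⟩
    obtain ⟨z, hz, -⟩ := hz
    have hR₀z : R₀.eval z ≤ 0 := by
      simp only [hR₁', eval_sub, eval_mul] at hz
      rw [eval_R₀, quadRes, hz, zero_mul, add_zero, neg_nonpos]
      positivity
    obtain ⟨x₀, hroot, hright⟩ := exists_isRoot_forall_gt_eval_pos hR₀z hpos
    have hdisc : 0 ≤ discrim (M.eval x₀) (a.eval x₀) (b.eval x₀) :=
      discrim_nonneg_of_forall_gt_quadRes_pos (n := N.eval) (c := c.eval) (d := d.eval)
        M.continuousAt a.continuousAt b.continuousAt fun x hx => eval_R₀ x ▸ hright x hx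
    exact ⟨x₀, exists_common_root_of_quadRes_eq_zero_of_discrim_nonneg (hM x₀ ⟨hroot, ·⟩)
      hdisc (eval_R₀ x₀ ▸ hroot)⟩
  · rintro α ⟨hN, hR₀α, hMα⟩
    exact exists_common_root_iff_of_quadRes_eq_zero_of_eq_zero hMα (hN α ⟨hR₀α, ·⟩)
      (eval_R₀ α ▸ hR₀α)
end

section
/- Let p : ℝ² → ℝ be a smooth submersion of the form p(x,y) = A(y)x² + B(y)x + C(y), where A, B, C : ℝ → ℝ are smooth. Suppose (i) A(y) ≠ 0 for every y ∈ ℝ, and (ii) the discriminant Δ(y) = B(y)² − 4A(y)C(y) is a polynomial in y of odd degree. Then the level set p⁻¹{0} is connected. -/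
open Set Polynomial Function

/-- Let `p(x,y) = A(y)x² + B(y)x + C(y)` be a smooth
submersion with `A` nowhere zero and discriminant `Δ(y) = B(y)² − 4A(y)C(y)` a
polynomial of odd degree.  Then `p⁻¹{0}` is connected. -/
theorem level_set_connected_quadratic_odd
    (A B C : ℝ → ℝ)
    (hA : ContDiff ℝ (⊤ : ℕ∞) A) (hB : ContDiff ℝ (⊤ : ℕ∞) B) (hC : ContDiff ℝ (⊤ : ℕ∞) C)
    (p : ℝ × ℝ → ℝ)
    (hp : ∀ x y : ℝ, p (x, y) = A y * x ^ 2 + B y * x + C y)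
    (hsub : ∀ v : ℝ × ℝ, fderiv ℝ p v ≠ 0)
    (hAne : ∀ y : ℝ, A y ≠ 0)
    (Δ : Polynomial ℝ)
    (hΔ : ∀ y : ℝ, Δ.eval y = (B y) ^ 2 - 4 * A y * C y)
    (hodd : Odd Δ.natDegree) :
    IsConnected {v : ℝ × ℝ | p v = 0} := by
  classical
  have hA2 : ∀ y : ℝ, (2 : ℝ) * A y ≠ 0 := fun y => mul_ne_zero two_ne_zero (hAne y)
  -- the function p is smooth
  have pfun : p = fun v : ℝ × ℝ => A v.2 * v.1 ^ 2 + B v.2 * v.1 + C v.2 := by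
    funext v; obtain ⟨x, y⟩ := v; exact hp x y
  have hpc : ContDiff ℝ (⊤ : ℕ∞) p := by
    rw [pfun]
    exact (((hA.comp contDiff_snd).mul (contDiff_fst.pow 2)).add
      ((hB.comp contDiff_snd).mul contDiff_fst)).add (hC.comp contDiff_snd)
  have hpd : Differentiable ℝ p := hpc.differentiable (by simp)
  -- the vertex abscissa and the function h(y) = p(x₀ y, y) = -Δ(y)/(4 A y)
  set x₀ : ℝ → ℝ := fun y => -B y / (2 * A y) with hx₀def
  set h : ℝ → ℝ := fun y => p (x₀ y, y) with hhdef
  have hx₀d : Differentiable ℝ x₀ := by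
    have : ContDiff ℝ (⊤ : ℕ∞) x₀ := hB.neg.div (contDiff_const.mul hA) hA2
    exact this.differentiable (by simp)
  have hcont : Continuous h := by
    have : ContDiff ℝ (⊤ : ℕ∞) h := hpc.comp (((hB.neg.div (contDiff_const.mul hA) hA2)).prodMk contDiff_id)
    exact this.continuous
  -- the x-partial derivative of p
  have hx : ∀ x y : ℝ, fderiv ℝ p (x, y) (1, 0) = 2 * A y * x + B y := by
    intro x y
    have h1 : HasDerivAt (fun t : ℝ => p (t, y)) (fderiv ℝ p (x, y) (1, 0)) x :=
      (hpd (x, y)).hasFDerivAt.comp_hasDerivAt x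
        ((hasDerivAt_id x).prodMk (hasDerivAt_const x y))
    have h2 : HasDerivAt (fun t : ℝ => p (t, y)) (2 * A y * x + B y) x := by
      simp only [hp]
      have h3 : HasDerivAt (fun t : ℝ => A y * t ^ 2 + B y * t + C y)
          (A y * (↑2 * x ^ 1) + B y * 1 + 0) x :=
        (((hasDerivAt_pow 2 x).const_mul (A y)).add ((hasDerivAt_id x).const_mul (B y))).add
          (hasDerivAt_const x (C y))
      convert h3 using 1
      push_cast; ring
    exact h1.unique h2
  have hxzero : ∀ y : ℝ, fderiv ℝ p (x₀ y, y) (1, 0) = 0 := by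
    intro y
    rw [hx (x₀ y) y]
    simp only [hx₀def]
    rw [neg_div, mul_neg, mul_comm (2 * A y) (B y / (2 * A y)),
      div_mul_cancel₀ _ (hA2 y)]
    ring
  -- h has derivative fderiv p (x₀ y, y) (x₀' y, 1)
  have hhd : ∀ y : ℝ, HasDerivAt h (fderiv ℝ p (x₀ y, y) (deriv x₀ y, 1)) y := by
    intro y
    have hγ : HasDerivAt (fun t : ℝ => ((x₀ t, t) : ℝ × ℝ)) (deriv x₀ y, 1) y :=
      ((hx₀d y).hasDerivAt).prodMk (hasDerivAt_id y)
    exact ((hpd (x₀ y, y)).hasFDerivAt).comp_hasDerivAt_of_eq y hγ rfl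
  -- the derivative of h never vanishes (this uses the submersion hypothesis)
  have hkey : ∀ y : ℝ, deriv h y ≠ 0 := by
    intro y hzero
    rw [(hhd y).deriv] at hzero
    apply hsub (x₀ y, y)
    refine ContinuousLinearMap.ext fun v => ?_
    have hv : v = (v.1 - v.2 * deriv x₀ y) • ((1 : ℝ), (0 : ℝ)) + v.2 • (deriv x₀ y, 1) := by
      obtain ⟨a, b⟩ := v
      simp only [Prod.smul_mk, Prod.mk_add_mk, Prod.mk.injEq, smul_eq_mul]
      constructor <;> ring
    rw [hv, map_add, map_smul, map_smul, hxzero y, hzero]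
    simp
  -- h is injective (Rolle)
  have hinj : Function.Injective h := by
    have key2 : ∀ a b : ℝ, a < b → h a ≠ h b := by
      intro a b hab he
      obtain ⟨c, _, hc⟩ := exists_deriv_eq_zero hab hcont.continuousOn he
      exact hkey c hc
    intro a b he
    rcases lt_trichotomy a b with hl | hl | hl
    · exact absurd he (key2 a b hl)
    · exact hl
    · exact absurd he.symm (key2 b a hl)
  -- relation between Δ and h
  have hΔh : ∀ y : ℝ, Δ.eval y = -(4 * A y) * h y := by
    intro y
    have hy : h y = A y * x₀ y ^ 2 + B y * x₀ y + C y := hp _ _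
    rw [hΔ, hy]
    have hAy := hAne y
    simp only [hx₀def]
    field_simp
    ring
  -- Δ has a root (odd degree)
  have hΔne : Δ.natDegree ≠ 0 := by
    intro h0; rw [h0] at hodd; exact (Nat.not_odd_iff_even.2 Even.zero) hodd
  have hdeg : 0 < Δ.degree := natDegree_pos_iff_degree_pos.mp (Nat.pos_of_ne_zero hΔne)
  have hΔcont : Continuous fun y : ℝ => Δ.eval y := Δ.continuous
  have hroot : ∃ y₀ : ℝ, Δ.eval y₀ = 0 := by
    -- find points with negative and positive values
    set Q : Polynomial ℝ := Δ.comp (-X) with hQdef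
    have hQeval : ∀ y : ℝ, Q.eval y = Δ.eval (-y) := by
      intro y; simp [hQdef, eval_comp]
    have hQdeg : Q.natDegree = Δ.natDegree := by
      rw [hQdef, natDegree_comp]
      simp
    have hQlc : Q.leadingCoeff = -Δ.leadingCoeff := by
      rw [hQdef, leadingCoeff_comp (by simp)]
      simp [hodd.neg_one_pow]
    have hQdeg' : 0 < Q.degree := by
      rw [← natDegree_pos_iff_degree_pos, hQdeg]
      exact Nat.pos_of_ne_zero hΔne
    have hex : ∃ a b : ℝ, Δ.eval a ≤ 0 ∧ 0 ≤ Δ.eval b := by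
      rcases le_total 0 Δ.leadingCoeff with hlc | hlc
      · have h1 := Δ.tendsto_atTop_of_leadingCoeff_nonneg hdeg hlc
        have h2 := Q.tendsto_atBot_of_leadingCoeff_nonpos hQdeg' (by rw [hQlc]; linarith)
        obtain ⟨b, hb⟩ := (h1.eventually_ge_atTop 0).exists
        obtain ⟨a, ha⟩ := (h2.eventually_le_atBot 0).exists
        exact ⟨-a, b, by rw [← hQeval]; exact ha, hb⟩
      · have h1 := Δ.tendsto_atBot_of_leadingCoeff_nonpos hdeg hlc
        have h2 := Q.tendsto_atTop_of_leadingCoeff_nonneg hQdeg' (by rw [hQlc]; linarith)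
        obtain ⟨a, ha⟩ := (h1.eventually_le_atBot 0).exists
        obtain ⟨b, hb⟩ := (h2.eventually_ge_atTop 0).exists
        exact ⟨a, -b, ha, by rw [← hQeval]; exact hb⟩
    obtain ⟨a, b, ha, hb⟩ := hex
    obtain ⟨c, hc⟩ := intermediate_value_univ a b hΔcont ⟨ha, hb⟩
    exact ⟨c, hc⟩
  obtain ⟨y₀, hy₀⟩ := hroot
  have hy₀h : h y₀ = 0 := by
    have h4 : -(4 * A y₀) ≠ 0 := neg_ne_zero.mpr (mul_ne_zero four_ne_zero (hAne y₀))
    have hth := hΔh y₀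
    rw [hy₀] at hth
    exact (mul_eq_zero.mp hth.symm).resolve_left h4
  -- A has constant sign
  have hAroot : ∀ a b : ℝ, A a < 0 → 0 < A b → False := by
    intro a b ha hb
    obtain ⟨c, hc⟩ := intermediate_value_univ a b hA.continuous ⟨ha.le, hb.le⟩
    exact hAne c hc
  have hAsign : (∀ y, 0 < A y) ∨ (∀ y, A y < 0) := by
    rcases (hAne 0).lt_or_gt with h0 | h0
    · right; intro y
      rcases (hAne y).lt_or_gt with hy | hy
      · exact hy
      · exact absurd (hAroot 0 y h0 hy) id
    · left; intro y
      rcases (hAne y).lt_or_gt with hy | hy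
      · exact absurd (hAroot y 0 hy h0) id
      · exact hy
  -- membership description of {Δ ≥ 0} via h
  have hmem : (∀ y : ℝ, 0 ≤ Δ.eval y ↔ h y ≤ 0) ∨ (∀ y : ℝ, 0 ≤ Δ.eval y ↔ 0 ≤ h y) := by
    rcases hAsign with hs | hs
    · left; intro y; rw [hΔh y]
      constructor <;> intro hy <;> nlinarith [hs y]
    · right; intro y; rw [hΔh y]
      constructor <;> intro hy <;> nlinarith [hs y]
  -- the set of admissible y
  set I : Set ℝ := {y : ℝ | 0 ≤ Δ.eval y} with hIdef
  have hIoc : OrdConnected I := by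
    constructor
    intro a ha b hb z hz
    rcases hmem with hm | hm <;>
      rcases hcont.strictMono_of_inj hinj with hmo | hmo <;>
      simp only [hIdef, mem_setOf_eq, hm] at ha hb ⊢
    · exact le_trans (hmo.monotone hz.2) hb
    · exact le_trans (hmo.antitone hz.1) ha
    · exact le_trans ha (hmo.monotone hz.1)
    · exact le_trans hb (hmo.antitone hz.2)
  have hy₀I : y₀ ∈ I := by simp [hIdef, hy₀]
  -- the two root branches
  set r : ℝ → ℝ := fun y => Real.sqrt (Δ.eval y) with hrdef
  have hrcont : Continuous r := Real.continuous_sqrt.comp hΔcont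
  set fP : ℝ → ℝ × ℝ := fun y => ((-B y + r y) / (2 * A y), y) with hfPdef
  set fM : ℝ → ℝ × ℝ := fun y => ((-B y - r y) / (2 * A y), y) with hfMdef
  have hfPc : Continuous fP :=
    ((hB.continuous.neg.add hrcont).div (continuous_const.mul hA.continuous) hA2).prodMk
      continuous_id
  have hfMc : Continuous fM :=
    ((hB.continuous.neg.sub hrcont).div (continuous_const.mul hA.continuous) hA2).prodMk
      continuous_id
  -- the level set equals the union of the two branches
  have key : ∀ x y : ℝ, p (x, y) = 0 ↔ (2 * A y * x + B y) ^ 2 = Δ.eval y := by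
    intro x y
    rw [hp, hΔ]
    constructor
    · intro h0; linear_combination 4 * A y * h0
    · intro h0
      have h4 : (4 : ℝ) * A y ≠ 0 := mul_ne_zero four_ne_zero (hAne y)
      have hz : 4 * A y * (A y * x ^ 2 + B y * x + C y) = 0 := by linear_combination h0
      exact (mul_eq_zero.mp hz).resolve_left h4
  have hset : {v : ℝ × ℝ | p v = 0} = fP '' I ∪ fM '' I := by
    ext ⟨x, y⟩
    simp only [mem_setOf_eq, mem_union, mem_image, key]
    constructor
    · intro he
      have hnn : 0 ≤ Δ.eval y := he ▸ sq_nonneg _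
      have hr2 : r y ^ 2 = Δ.eval y := Real.sq_sqrt hnn
      have hsq : (2 * A y * x + B y) ^ 2 = (r y) ^ 2 := he.trans hr2.symm
      rcases sq_eq_sq_iff_eq_or_eq_neg.mp hsq with h1 | h1
      · left
        refine ⟨y, hnn, ?_⟩
        have hx' : x = (-B y + r y) / (2 * A y) := by
          rw [eq_div_iff (hA2 y)]; linarith [h1]
        rw [hfPdef]
        simp only [Prod.mk.injEq]
        exact ⟨hx'.symm, trivial⟩
      · right
        refine ⟨y, hnn, ?_⟩
        have hx' : x = (-B y - r y) / (2 * A y) := by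
          rw [eq_div_iff (hA2 y)]; linarith [h1]
        rw [hfMdef]
        simp only [Prod.mk.injEq]
        exact ⟨hx'.symm, trivial⟩
    · rintro (⟨y', hy', he⟩ | ⟨y', hy', he⟩)
      · rw [hfPdef, Prod.ext_iff] at he
        obtain ⟨hex, rfl⟩ := he
        subst hex
        have hc : 2 * A y' * ((-B y' + r y') / (2 * A y')) + B y' = r y' := by
          rw [mul_comm (2 * A y') ((-B y' + r y') / (2 * A y')),
            div_mul_cancel₀ _ (hA2 y')]
          ring
        rw [hc]
        rw [hIdef, mem_setOf_eq] at hy'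
        exact Real.sq_sqrt hy'
      · rw [hfMdef, Prod.ext_iff] at he
        obtain ⟨hex, rfl⟩ := he
        subst hex
        have hc : 2 * A y' * ((-B y' - r y') / (2 * A y')) + B y' = -r y' := by
          rw [mul_comm (2 * A y') ((-B y' - r y') / (2 * A y')),
            div_mul_cancel₀ _ (hA2 y')]
          ring
        rw [hc, neg_sq]
        rw [hIdef, mem_setOf_eq] at hy'
        exact Real.sq_sqrt hy'
  -- finish: union of two connected images meeting at (x₀ y₀, y₀)
  rw [hset]
  have hIconn : IsConnected I := ⟨⟨y₀, hy₀I⟩, hIoc.isPreconnected⟩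
  have hcP : IsConnected (fP '' I) := hIconn.image fP hfPc.continuousOn
  have hcM : IsConnected (fM '' I) := hIconn.image fM hfMc.continuousOn
  have hrq : r y₀ = 0 := by rw [hrdef]; simp [hy₀]
  have hmeet : fP y₀ = fM y₀ := by
    rw [hfPdef, hfMdef]
    simp [hrq]
  exact IsConnected.union ⟨fP y₀, ⟨y₀, hy₀I, rfl⟩, ⟨y₀, hy₀I, hmeet.symm⟩⟩ hcP hcM
end

section
/- Let p : ℝ² → ℝ be a smooth submersion of the form p(x,y) = A(y)x² + B(y)x + C(y), where A, B, C : ℝ → ℝ are smooth. Suppose (i) A(y) = 0 for exactly one value y ∈ ℝ, (ii) for that value y with A(y) = 0, there exists exactly one x ∈ ℝ such that p(x,y) = 0, and (iii) the discriminant Δ(y) = B(y)² − 4A(y)C(y) is a polynomial in y of even degree with negative leading coefficient. Then the level set p⁻¹{0} is connected. -/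
open Set Filter Topology

lemma right_side (A B C : ℝ → ℝ)
    (hA : ContDiff ℝ (⊤ : ℕ∞) A) (hB : ContDiff ℝ (⊤ : ℕ∞) B) (hC : ContDiff ℝ (⊤ : ℕ∞) C)
    (p : ℝ × ℝ → ℝ) (hp : ∀ x y : ℝ, p (x, y) = A y * x ^ 2 + B y * x + C y)
    (hkey : ∀ x y a' b' c' : ℝ, HasDerivAt A a' y → HasDerivAt B b' y → HasDerivAt C c' y →
      2 * A y * x + B y = 0 → a' * x ^ 2 + b' * x + c' ≠ 0)
    (y₀ x₀ : ℝ) (hy₀ : A y₀ = 0) (hB0 : B y₀ ≠ 0) (hx₀ : B y₀ * x₀ + C y₀ = 0)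
    (hApos : ∀ y, y₀ < y → 0 < A y)
    (hDneg : ∃ y₂, y₀ < y₂ ∧ (B y₂) ^ 2 - 4 * A y₂ * C y₂ < 0) :
    (x₀, y₀) ∈ {v : ℝ × ℝ | p v = 0 ∧ y₀ ≤ v.2} ∧
      IsConnected {v : ℝ × ℝ | p v = 0 ∧ y₀ ≤ v.2} := by
  obtain ⟨y₂, hy₂0, hy₂⟩ := hDneg
  have cA : Continuous A := hA.continuous
  have cB : Continuous B := hB.continuous
  have cC : Continuous C := hC.continuous
  set D : ℝ → ℝ := fun y => (B y) ^ 2 - 4 * A y * C y with hDdef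
  have hDxy : ∀ y, D y = (B y) ^ 2 - 4 * A y * C y := fun _ => rfl
  have cD : Continuous D := by
    apply Continuous.sub (cB.pow 2)
    exact (continuous_const.mul cA).mul cC
  have hApos' : ∀ y, y₀ < y → A y ≠ 0 := fun y hy => (hApos y hy).ne'
  have hDy₀ : 0 < D y₀ := by
    rw [hDxy, hy₀]
    have := hB0
    nlinarith [sq_nonneg (B y₀), sq_abs (B y₀), abs_pos.mpr hB0]
  set f : ℝ → ℝ := fun y => C y - (B y) ^ 2 / (4 * A y) with hfdef
  have hDf : ∀ y, y₀ < y → D y = -(4 * A y) * f y := by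
    intro y hy
    have hAne := hApos' y hy
    rw [hDxy]
    simp only [hfdef]
    have h4 : (4 : ℝ) * A y ≠ 0 := by simp [hAne]
    have := mul_inv_cancel₀ h4
    linear_combination (-(B y) ^ 2) * this
  have hA' : ∀ z : ℝ, HasDerivAt A (deriv A z) z :=
    fun z => (hA.differentiable (by simp) z).hasDerivAt
  have hB' : ∀ z : ℝ, HasDerivAt B (deriv B z) z :=
    fun z => (hB.differentiable (by simp) z).hasDerivAt
  have hC' : ∀ z : ℝ, HasDerivAt C (deriv C z) z :=
    fun z => (hC.differentiable (by simp) z).hasDerivAt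
  have hfderiv : ∀ y, y₀ < y → HasDerivAt f
      (deriv A y * (-(B y) / (2 * A y)) ^ 2 + deriv B y * (-(B y) / (2 * A y)) + deriv C y) y := by
    intro y hy
    have hAne := hApos' y hy
    have h4 : (4 : ℝ) * A y ≠ 0 := by
      simp [hAne]
    have hdiv := ((hB' y).pow 2).div ((hA' y).const_mul 4) h4
    have h5 : HasDerivAt (fun y => C y - B y ^ 2 / (4 * A y)) _ y := (hC' y).sub hdiv
    convert h5 using 1
    field_simp
    have e : (B ^ 2) y = B y ^ 2 := rfl
    linear_combination (-4 * deriv A y) * e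
  have hF : ∀ y, y₀ < y →
      deriv A y * (-(B y) / (2 * A y)) ^ 2 + deriv B y * (-(B y) / (2 * A y)) + deriv C y ≠ 0 := by
    intro y hy
    apply hkey _ y _ _ _ (hA' y) (hB' y) (hC' y)
    have hAne := hApos' y hy
    field_simp
    ring
  have hfc : ContinuousOn f (Ioi y₀) :=
    fun y hy => ((hfderiv y hy).continuousAt).continuousWithinAt
  have inj : ∀ u v, y₀ < u → u < v → f u ≠ f v := by
    intro u v hu huv heq
    obtain ⟨c, hc, hc0⟩ := exists_hasDerivAt_eq_zero huv
      (hfc.mono (fun z hz => lt_of_lt_of_le hu hz.1)) heq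
      (fun z hz => hfderiv z (hu.trans hz.1))
    exact hF c (hu.trans hc.1) hc0
  -- choose y₁ close to y₀ with D y₁ > 0
  obtain ⟨y₁, hy₁D, hy₁mem⟩ : ∃ y₁, 0 < D y₁ ∧ y₁ ∈ Ioo y₀ y₂ := by
    have h1 : ∀ᶠ z in 𝓝[>] y₀, 0 < D z :=
      Filter.Eventually.filter_mono nhdsWithin_le_nhds (cD.continuousAt (Ioi_mem_nhds hDy₀))
    have h2 : Ioo y₀ y₂ ∈ 𝓝[>] y₀ := Ioo_mem_nhdsGT_of_mem ⟨le_refl y₀, hy₂0⟩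
    exact (h1.and h2).exists
  have hfy₁ : f y₁ < 0 := by nlinarith [hDf y₁ hy₁mem.1, hApos y₁ hy₁mem.1]
  have hfy₂ : 0 < f y₂ := by nlinarith [hDf y₂ hy₂0, hApos y₂ hy₂0, hDxy y₂, hy₂]
  have mono : ∀ a b, y₀ < a → a < b → f a < f b := by
    intro a b ha hab
    rcases lt_or_ge (f a) (f b) with h | h
    · exact h
    exfalso
    set L := min a y₁ with hL
    set R := max b y₂ with hR
    have hLy : y₀ < L := lt_min ha hy₁mem.1
    have haR : a ≤ R := le_trans hab.le (le_max_left _ _)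
    have hLR : L ≤ R := le_trans (min_le_left _ _) haR
    have hIcc : Icc L R ⊆ Ioi y₀ := fun z hz => lt_of_lt_of_le hLy hz.1
    have hinj : InjOn f (Icc L R) := by
      intro u hu v hv huv
      rcases lt_trichotomy u v with h' | h' | h'
      · exact absurd huv (inj u v (hIcc hu) h')
      · exact h'
      · exact absurd huv.symm (inj v u (hIcc hv) h')
    have haM : a ∈ Icc L R := ⟨min_le_left _ _, haR⟩
    have hbM : b ∈ Icc L R := ⟨le_trans (min_le_left _ _) hab.le, le_max_left _ _⟩
    have hy₁M : y₁ ∈ Icc L R := ⟨min_le_right _ _, le_trans hy₁mem.2.le (le_max_right _ _)⟩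
    have hy₂M : y₂ ∈ Icc L R := ⟨le_trans (min_le_right _ _) hy₁mem.2.le, le_max_right _ _⟩
    rcases ContinuousOn.strictMonoOn_of_injOn_Icc' hLR (hfc.mono hIcc) hinj with hm | hm
    · exact absurd (hm haM hbM hab) (not_lt.mpr h)
    · have := hm hy₁M hy₂M hy₁mem.2
      linarith
  obtain ⟨m, hmIcc, hfm⟩ : ∃ m ∈ Icc y₁ y₂, f m = 0 := by
    have hsub := intermediate_value_Icc hy₁mem.2.le
      (hfc.mono (fun z hz => lt_of_lt_of_le hy₁mem.1 hz.1))
    obtain ⟨m, hm, hm0⟩ := hsub ⟨hfy₁.le, hfy₂.le⟩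
    exact ⟨m, hm, hm0⟩
  have hm0 : y₀ < m := lt_of_lt_of_le hy₁mem.1 hmIcc.1
  have hDge : ∀ y, y₀ < y → y ≤ m → 0 ≤ D y := by
    intro y hy hym
    rcases eq_or_lt_of_le hym with h | h
    · rw [h, hDf m hm0, hfm]; ring_nf; exact le_refl 0
    · nlinarith [hDf y hy, hApos y hy, mono y m hy h]
  have hDlt : ∀ y, m < y → D y < 0 := by
    intro y hy
    have hy' : y₀ < y := hm0.trans hy
    nlinarith [hDf y hy', hApos y hy', mono m y hm0 hy]
  have hDm : D m = 0 := by rw [hDf m hm0, hfm]; ring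
  set r : ℝ → ℝ → ℝ := fun s y => (-B y + s * Real.sqrt (D y)) / (2 * A y) with hrdef
  have hr : ∀ s y, r s y = (-B y + s * Real.sqrt (D y)) / (2 * A y) := fun _ _ => rfl
  have hroot : ∀ s y, s ^ 2 = 1 → y₀ < y → y ≤ m → p (r s y, y) = 0 := by
    intro s y hs hy hym
    have hAne := hApos' y hy
    have ht : (s * Real.sqrt (D y)) ^ 2 = D y := by
      rw [mul_pow, hs, one_mul, Real.sq_sqrt (hDge y hy hym)]
    rw [hp, hr]
    field_simp
    linear_combination ht + hDxy y
  have hconv : ∀ x y, y₀ < y → p (x, y) = 0 → y ≤ m ∧ (x = r 1 y ∨ x = r (-1) y) := by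
    intro x y hy hpxy
    rw [hp] at hpxy
    have hAne := hApos' y hy
    have hsq2 : (2 * A y * x + B y) ^ 2 = D y := by
      linear_combination 4 * A y * hpxy - hDxy y
    have hDy0 : 0 ≤ D y := hsq2 ▸ sq_nonneg _
    have hym : y ≤ m := by
      by_contra h
      push_neg at h
      exact absurd hDy0 (not_le.mpr (hDlt y h))
    refine ⟨hym, ?_⟩
    have hs : Real.sqrt (D y) = |2 * A y * x + B y| := by
      rw [← hsq2, Real.sqrt_sq_eq_abs]
    rcases abs_cases (2 * A y * x + B y) with ⟨h, _⟩ | ⟨h, _⟩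
    · left
      rw [hr, hs, h]
      field_simp
      ring
    · right
      rw [hr, hs, h]
      field_simp
      ring
  have hmem0 : ∀ x, p (x, y₀) = 0 → x = x₀ := by
    intro x hx
    rw [hp, hy₀] at hx
    have h1 : B y₀ * x = B y₀ * x₀ := by nlinarith [hx, hx₀]
    exact mul_left_cancel₀ hB0 h1
  set G : Set (ℝ × ℝ) :=
    (fun y => (r 1 y, y)) '' Ioc y₀ m ∪ (fun y => (r (-1) y, y)) '' Ioc y₀ m with hGdef
  have hrc : ∀ s : ℝ, ContinuousOn (fun y => r s y) (Ioc y₀ m) := by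
    intro s
    apply ContinuousOn.div
    · exact (cB.neg.add (continuous_const.mul (Real.continuous_sqrt.comp cD))).continuousOn
    · exact (continuous_const.mul cA).continuousOn
    · intro z hz
      have := hApos z hz.1
      positivity
  have hrm : r 1 m = r (-1) m := by
    rw [hr, hr, hDm, Real.sqrt_zero]
    ring_nf
  have hGconn : IsConnected G := by
    apply IsConnected.union
    · refine ⟨(r 1 m, m), ⟨m, ⟨hm0, le_refl m⟩, rfl⟩, ⟨m, ⟨hm0, le_refl m⟩, ?_⟩⟩
      rw [hrm]
    · exact (isConnected_Ioc hm0).image _ ((hrc 1).prodMk continuousOn_id)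
    · exact (isConnected_Ioc hm0).image _ ((hrc (-1)).prodMk continuousOn_id)
  -- the limit point
  have hclos : (x₀, y₀) ∈ closure G := by
    set s₀ : ℝ := if 0 < B y₀ then 1 else -1 with hs₀def
    have hs₀ : s₀ = 1 ∨ s₀ = -1 := by
      rw [hs₀def]; split <;> simp
    have hs₀sq : s₀ ^ 2 = 1 := by rcases hs₀ with h | h <;> rw [h] <;> norm_num
    have hsqrtD₀ : Real.sqrt (D y₀) = |B y₀| := by
      rw [show D y₀ = (B y₀) ^ 2 by rw [hDxy, hy₀]; ring, Real.sqrt_sq_eq_abs]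
    have hden₀ : -B y₀ - s₀ * Real.sqrt (D y₀) = -2 * B y₀ := by
      rw [hsqrtD₀, hs₀def]
      split
      · rename_i h; rw [abs_of_pos h]; ring
      · rename_i h
        push_neg at h
        rw [abs_of_neg (lt_of_le_of_ne h hB0)]; ring
    set g : ℝ → ℝ := fun y => 2 * C y / (-B y - s₀ * Real.sqrt (D y)) with hgdef
    have hgr : ∀ y, g y = 2 * C y / (-B y - s₀ * Real.sqrt (D y)) := fun _ => rfl
    have hdenc : Continuous (fun y => -B y - s₀ * Real.sqrt (D y)) :=
      cB.neg.sub (continuous_const.mul (Real.continuous_sqrt.comp cD))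
    have hgc : ContinuousAt g y₀ := by
      apply ContinuousAt.div
      · exact (continuous_const.mul cC).continuousAt
      · exact hdenc.continuousAt
      · rw [hden₀]
        simp [hB0]
    have hgy₀ : g y₀ = x₀ := by
      rw [hgr, hden₀]
      rw [div_eq_iff (by simp [hB0] : (-2 : ℝ) * B y₀ ≠ 0)]
      linarith
    have hevden : ∀ᶠ y in 𝓝[>] y₀, -B y - s₀ * Real.sqrt (D y) ≠ 0 := by
      apply Filter.Eventually.filter_mono nhdsWithin_le_nhds
      apply hdenc.continuousAt.eventually_ne
      rw [hden₀]
      simp [hB0]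
    have hevIoc : ∀ᶠ y in 𝓝[>] y₀, y ∈ Ioc y₀ m := by
      have h1 : ∀ᶠ y in 𝓝[>] y₀, y ∈ Ioi y₀ := eventually_mem_nhdsWithin
      have h2 : ∀ᶠ y in 𝓝[>] y₀, y ≤ m :=
        Filter.Eventually.filter_mono nhdsWithin_le_nhds
          (Iic_mem_nhds hm0)
      filter_upwards [h1, h2] with y hy1 hy2
      exact ⟨hy1, hy2⟩
    have heq : ∀ᶠ y in 𝓝[>] y₀, r s₀ y = g y := by
      filter_upwards [hevden, hevIoc] with y h1 h2
      have hAne := hApos' y h2.1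
      have hDy := hDge y h2.1 h2.2
      have ht : (s₀ * Real.sqrt (D y)) ^ 2 = D y := by
        rw [mul_pow, hs₀sq, one_mul, Real.sq_sqrt hDy]
      rw [hr, hgr]
      rw [div_eq_div_iff (by positivity : 2 * A y ≠ 0) h1]
      linear_combination -ht - hDxy y
    have htend : Tendsto (fun y => (r s₀ y, y)) (𝓝[>] y₀) (𝓝 (x₀, y₀)) := by
      apply Filter.Tendsto.prodMk_nhds
      · apply Filter.Tendsto.congr' (Filter.EventuallyEq.symm heq)
        rw [← hgy₀]
        exact hgc.tendsto.mono_left nhdsWithin_le_nhds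
      · exact tendsto_id.mono_left nhdsWithin_le_nhds
    apply mem_closure_of_tendsto htend
    filter_upwards [hevIoc] with y hy
    rcases hs₀ with h | h <;> rw [h]
    · exact Or.inl ⟨y, hy, rfl⟩
    · exact Or.inr ⟨y, hy, rfl⟩
  have hpt : p (x₀, y₀) = 0 := by
    rw [hp, hy₀]
    linarith [hx₀]
  have hSeq : {v : ℝ × ℝ | p v = 0 ∧ y₀ ≤ v.2} = insert (x₀, y₀) G := by
    ext ⟨x, y⟩
    simp only [mem_setOf_eq, mem_insert_iff, hGdef, mem_union, mem_image, Prod.mk.injEq]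
    constructor
    · rintro ⟨hpxy, hy⟩
      rcases eq_or_lt_of_le hy with h | h
      · exact Or.inl ⟨hmem0 x (h ▸ hpxy), h.symm⟩
      · obtain ⟨hym, hx⟩ := hconv x y h hpxy
        rcases hx with h1 | h1
        · exact Or.inr (Or.inl ⟨y, ⟨h, hym⟩, h1.symm, rfl⟩)
        · exact Or.inr (Or.inr ⟨y, ⟨h, hym⟩, h1.symm, rfl⟩)
    · rintro (⟨hx, hy⟩ | ⟨z, hz, hzx, rfl⟩ | ⟨z, hz, hzx, rfl⟩)
      · subst hx; subst hy; exact ⟨hpt, le_refl _⟩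
      · subst hzx; exact ⟨hroot 1 z (by norm_num) hz.1 hz.2, hz.1.le⟩
      · subst hzx; exact ⟨hroot (-1) z (by norm_num) hz.1 hz.2, hz.1.le⟩
  refine ⟨⟨hpt, le_refl _⟩, ?_⟩
  rw [hSeq]
  exact hGconn.subset_closure (subset_insert _ _)
    (insert_subset_iff.mpr ⟨hclos, subset_closure⟩)

lemma half_side (A B C : ℝ → ℝ)
    (hA : ContDiff ℝ (⊤ : ℕ∞) A) (hB : ContDiff ℝ (⊤ : ℕ∞) B) (hC : ContDiff ℝ (⊤ : ℕ∞) C)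
    (p : ℝ × ℝ → ℝ) (hp : ∀ x y : ℝ, p (x, y) = A y * x ^ 2 + B y * x + C y)
    (hkey : ∀ x y a' b' c' : ℝ, HasDerivAt A a' y → HasDerivAt B b' y → HasDerivAt C c' y →
      2 * A y * x + B y = 0 → a' * x ^ 2 + b' * x + c' ≠ 0)
    (y₀ x₀ : ℝ) (hy₀ : A y₀ = 0) (hAuniq : ∀ y, A y = 0 → y = y₀)
    (hB0 : B y₀ ≠ 0) (hx₀ : B y₀ * x₀ + C y₀ = 0)
    (hDneg : ∃ y₂, y₀ < y₂ ∧ (B y₂) ^ 2 - 4 * A y₂ * C y₂ < 0) :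
    (x₀, y₀) ∈ {v : ℝ × ℝ | p v = 0 ∧ y₀ ≤ v.2} ∧
      IsConnected {v : ℝ × ℝ | p v = 0 ∧ y₀ ≤ v.2} := by
  have hAne : ∀ y, y₀ < y → A y ≠ 0 :=
    fun y hy h => absurd (hAuniq y h) (ne_of_gt hy)
  have hsign : ∀ u v, y₀ < u → y₀ < v → 0 < A u → A v < 0 → False := by
    intro u v hu hv hAu hAv
    obtain ⟨c, hc, hc0⟩ := intermediate_value_uIcc (a := u) (b := v)
      (hA.continuous.continuousOn)
      (Set.mem_uIcc.mpr (Or.inr ⟨hAv.le, hAu.le⟩))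
    have hcy : y₀ < c := by
      rcases Set.mem_uIcc.mp hc with ⟨h1, _⟩ | ⟨h1, _⟩
      · exact lt_of_lt_of_le hu h1
      · exact lt_of_lt_of_le hv h1
    exact absurd (hAuniq c hc0) (ne_of_gt hcy)
  rcases (hAne (y₀ + 1) (by linarith)).lt_or_gt with hneg | hpos
  · -- A is negative on the right; negate everything
    have hAneg : ∀ y, y₀ < y → 0 < -A y := by
      intro y hy
      rcases (hAne y hy).lt_or_gt with h | h
      · linarith
      · exact absurd (hsign y (y₀ + 1) hy (by linarith) h hneg) not_false
    have h := right_side (fun z => -A z) (fun z => -B z) (fun z => -C z)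
      hA.neg hB.neg hC.neg (fun v => -(p v))
      (fun x y => by show -(p (x, y)) = -A y * x ^ 2 + -B y * x + -C y; rw [hp]; ring)
      (fun x y a' b' c' ha hb hc h1 h2 => by
        have ha' : HasDerivAt A (-a') y := by simpa [Pi.neg_def] using ha.neg
        have hb' : HasDerivAt B (-b') y := by simpa [Pi.neg_def] using hb.neg
        have hc' : HasDerivAt C (-c') y := by simpa [Pi.neg_def] using hc.neg
        have h1' : 2 * (-A y) * x + (-B y) = 0 := h1
        exact hkey x y (-a') (-b') (-c') ha' hb' hc' (by linarith) (by linarith))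
      y₀ x₀ (by show -A y₀ = 0; simp [hy₀]) (by show -B y₀ ≠ 0; simpa using hB0)
      (by show -B y₀ * x₀ + -C y₀ = 0; linarith)
      hAneg
      (by
        obtain ⟨y₂, h1, h2⟩ := hDneg
        exact ⟨y₂, h1, by show (-B y₂) ^ 2 - 4 * -A y₂ * -C y₂ < 0; nlinarith [h2]⟩)
    have hset : {v : ℝ × ℝ | -(p v) = 0 ∧ y₀ ≤ v.2} = {v : ℝ × ℝ | p v = 0 ∧ y₀ ≤ v.2} := by
      ext v; simp [neg_eq_zero]
    rw [hset] at h
    exact h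
  · have hApos : ∀ y, y₀ < y → 0 < A y := by
      intro y hy
      rcases (hAne y hy).lt_or_gt with h | h
      · exact absurd (hsign (y₀ + 1) y (by linarith) hy hpos h) not_false
      · exact h
    exact right_side A B C hA hB hC p hp hkey y₀ x₀ hy₀ hB0 hx₀ hApos hDneg

lemma submersion_key (A B C : ℝ → ℝ)
    (p : ℝ × ℝ → ℝ) (hp : ∀ x y : ℝ, p (x, y) = A y * x ^ 2 + B y * x + C y)
    (hsub : ∀ v : ℝ × ℝ, fderiv ℝ p v ≠ 0)
    (x y a' b' c' : ℝ) (ha : HasDerivAt A a' y) (hb : HasDerivAt B b' y)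
    (hc : HasDerivAt C c' y)
    (h1 : 2 * A y * x + B y = 0) : a' * x ^ 2 + b' * x + c' ≠ 0 := by
  intro h2
  have hpe : p = fun v : ℝ × ℝ => A v.2 * (v.1 * v.1) + B v.2 * v.1 + C v.2 :=
    funext fun v => by rw [hp v.1 v.2]; ring
  have hfst : HasFDerivAt (fun v : ℝ × ℝ => v.1) (ContinuousLinearMap.fst ℝ ℝ ℝ) (x, y) :=
    hasFDerivAt_fst
  have hAc : HasFDerivAt (fun v : ℝ × ℝ => A v.2) (a' • ContinuousLinearMap.snd ℝ ℝ ℝ) (x, y) :=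
    ha.comp_hasFDerivAt (x, y) hasFDerivAt_snd
  have hBc : HasFDerivAt (fun v : ℝ × ℝ => B v.2) (b' • ContinuousLinearMap.snd ℝ ℝ ℝ) (x, y) :=
    hb.comp_hasFDerivAt (x, y) hasFDerivAt_snd
  have hCc : HasFDerivAt (fun v : ℝ × ℝ => C v.2) (c' • ContinuousLinearMap.snd ℝ ℝ ℝ) (x, y) :=
    hc.comp_hasFDerivAt (x, y) hasFDerivAt_snd
  have h := ((hAc.mul (hfst.mul hfst)).add (hBc.mul hfst)).add hCc
  have hpe' : p = ((fun v : ℝ × ℝ => A v.2) * ((fun v : ℝ × ℝ => v.1) * fun v : ℝ × ℝ => v.1)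
      + (fun v : ℝ × ℝ => B v.2) * fun v : ℝ × ℝ => v.1) + fun v : ℝ × ℝ => C v.2 := hpe
  rw [← hpe'] at h
  have h3 := hsub (x, y)
  rw [h.fderiv] at h3
  apply h3
  apply ContinuousLinearMap.ext
  intro w
  simp only [ContinuousLinearMap.add_apply, ContinuousLinearMap.smul_apply,
    ContinuousLinearMap.coe_fst', ContinuousLinearMap.coe_snd', ContinuousLinearMap.zero_apply,
    smul_eq_mul, Pi.mul_apply]
  linear_combination w.1 * h1 + w.2 * h2


/-- Let `p(x,y) = A(y)x² + B(y)x + C(y)` be a smooth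
submersion such that `A` vanishes at exactly one point, at which the equation
`p(x,y) = 0` has exactly one solution `x`, and whose discriminant
`Δ(y) = B(y)² − 4A(y)C(y)` is a polynomial of even degree with negative
leading coefficient.  Then `p⁻¹{0}` is connected. -/
theorem level_set_connected_quadratic_even
    (A B C : ℝ → ℝ)
    (hA : ContDiff ℝ (⊤ : ℕ∞) A) (hB : ContDiff ℝ (⊤ : ℕ∞) B) (hC : ContDiff ℝ (⊤ : ℕ∞) C)
    (p : ℝ × ℝ → ℝ)
    (hp : ∀ x y : ℝ, p (x, y) = A y * x ^ 2 + B y * x + C y)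
    (hsub : ∀ v : ℝ × ℝ, fderiv ℝ p v ≠ 0)
    (hAone : ∃! y : ℝ, A y = 0)
    (hxone : ∀ y : ℝ, A y = 0 → ∃! x : ℝ, p (x, y) = 0)
    (Δ : Polynomial ℝ)
    (hΔ : ∀ y : ℝ, Δ.eval y = (B y) ^ 2 - 4 * A y * C y)
    (heven : Even Δ.natDegree)
    (hneg : Δ.leadingCoeff < 0) :
    IsConnected {v : ℝ × ℝ | p v = 0} := by

  obtain ⟨y₀, hy₀, hyuniq⟩ := hAone
  have hkey : ∀ x y a' b' c' : ℝ, HasDerivAt A a' y → HasDerivAt B b' y → HasDerivAt C c' y →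
      2 * A y * x + B y = 0 → a' * x ^ 2 + b' * x + c' ≠ 0 :=
    fun x y a' b' c' ha hb hc h1 => submersion_key A B C p hp hsub x y a' b' c' ha hb hc h1
  obtain ⟨x₀, hx₀p, hxu⟩ := hxone y₀ hy₀
  rw [hp x₀ y₀, hy₀] at hx₀p
  have hx0eq : B y₀ * x₀ + C y₀ = 0 := by linarith
  have hB0 : B y₀ ≠ 0 := by
    intro h
    have hC0 : C y₀ = 0 := by rw [h] at hx0eq; linarith
    have h1 : p (x₀ + 1, y₀) = 0 := by rw [hp, hy₀, h, hC0]; ring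
    have := hxu (x₀ + 1) h1
    linarith
  -- degree facts
  have hΔy₀pos : 0 < Δ.eval y₀ := by
    rw [hΔ, hy₀]
    nlinarith [abs_pos.mpr hB0, sq_abs (B y₀)]
  have hdeg0 : Δ.natDegree ≠ 0 := by
    intro h
    obtain ⟨a, ha⟩ := Polynomial.natDegree_eq_zero.mp h
    rw [← ha] at hneg hΔy₀pos
    rw [Polynomial.leadingCoeff_C] at hneg
    rw [Polynomial.eval_C] at hΔy₀pos
    linarith
  have hdegpos : 0 < Δ.degree := Polynomial.natDegree_pos_iff_degree_pos.mp
    (Nat.pos_of_ne_zero hdeg0)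
  -- right-side negativity witness
  have hDnegR : ∃ y₂, y₀ < y₂ ∧ (B y₂) ^ 2 - 4 * A y₂ * C y₂ < 0 := by
    have h1 : Filter.Tendsto (fun x => Δ.eval x) Filter.atTop Filter.atBot :=
      Polynomial.tendsto_atBot_of_leadingCoeff_nonpos Δ hdegpos hneg.le
    have h2 : ∀ᶠ x in Filter.atTop, Δ.eval x < 0 := h1.eventually (eventually_lt_atBot 0)
    have h3 : ∀ᶠ x in Filter.atTop, y₀ < x := eventually_gt_atTop y₀
    obtain ⟨y₂, hy₂1, hy₂2⟩ := (h2.and h3).exists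
    exact ⟨y₂, hy₂2, by rw [← hΔ]; exact hy₂1⟩
  -- left-side negativity witness via composition with the reflection
  have hDnegL : ∃ y₂, y₀ < y₂ ∧ Δ.eval (2 * y₀ - y₂) < 0 := by
    set q : Polynomial ℝ := Polynomial.C (2 * y₀) - Polynomial.X with hq
    have hq1 : q.natDegree = 1 := by
      rw [hq, show Polynomial.C (2 * y₀) - Polynomial.X
        = -(Polynomial.X - Polynomial.C (2 * y₀)) by ring,
        Polynomial.natDegree_neg, Polynomial.natDegree_X_sub_C]
    have hqlc : q.leadingCoeff = -1 := by
      rw [hq, show Polynomial.C (2 * y₀) - Polynomial.X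
        = -(Polynomial.X - Polynomial.C (2 * y₀)) by ring,
        Polynomial.leadingCoeff_neg, Polynomial.leadingCoeff_X_sub_C]
    set Q : Polynomial ℝ := Δ.comp q with hQ
    have hQeval : ∀ x, Q.eval x = Δ.eval (2 * y₀ - x) := by
      intro x
      rw [hQ, Polynomial.eval_comp, hq]
      simp
    have hQdeg : Q.natDegree = Δ.natDegree := by
      rw [hQ, Polynomial.natDegree_comp, hq1, mul_one]
    have hQlc : Q.leadingCoeff = Δ.leadingCoeff := by
      rw [hQ, Polynomial.leadingCoeff_comp (by rw [hq1]; norm_num), hqlc,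
        heven.neg_one_pow, mul_one]
    have hQdegpos : 0 < Q.degree := Polynomial.natDegree_pos_iff_degree_pos.mp
      (by rw [hQdeg]; exact Nat.pos_of_ne_zero hdeg0)
    have h1 : Filter.Tendsto (fun x => Q.eval x) Filter.atTop Filter.atBot :=
      Polynomial.tendsto_atBot_of_leadingCoeff_nonpos Q hQdegpos (by rw [hQlc]; exact hneg.le)
    have h2 : ∀ᶠ x in Filter.atTop, Q.eval x < 0 := h1.eventually (eventually_lt_atBot 0)
    have h3 : ∀ᶠ x in Filter.atTop, y₀ < x := eventually_gt_atTop y₀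
    obtain ⟨y₂, hy₂1, hy₂2⟩ := (h2.and h3).exists
    exact ⟨y₂, hy₂2, by rw [← hQeval]; exact hy₂1⟩
  -- right half
  obtain ⟨hmemR, hconnR⟩ := half_side A B C hA hB hC p hp hkey y₀ x₀ hy₀ hyuniq hB0 hx0eq hDnegR
  -- left half via reflection
  have hσ : ∀ y : ℝ, 2 * y₀ - (2 * y₀ - y) = y := fun y => by ring
  obtain ⟨hmemL', hconnL'⟩ := half_side (fun y => A (2 * y₀ - y)) (fun y => B (2 * y₀ - y))
      (fun y => C (2 * y₀ - y))
      (hA.comp (contDiff_const.sub contDiff_id)) (hB.comp (contDiff_const.sub contDiff_id))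
      (hC.comp (contDiff_const.sub contDiff_id))
      (fun v => p (v.1, 2 * y₀ - v.2))
      (fun x y => by show p (x, 2 * y₀ - y) = _; rw [hp x (2 * y₀ - y)])
      (fun x y a' b' c' ha hb hc h1 h2 => by
        have hmir : HasDerivAt (fun z : ℝ => 2 * y₀ - z) (-1) y := by
          simpa using (hasDerivAt_id y).const_sub (2 * y₀)
        have hA' : HasDerivAt A (deriv A (2 * y₀ - y)) (2 * y₀ - y) :=
          (hA.differentiable (by simp) _).hasDerivAt
        have hB' : HasDerivAt B (deriv B (2 * y₀ - y)) (2 * y₀ - y) :=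
          (hB.differentiable (by simp) _).hasDerivAt
        have hC' : HasDerivAt C (deriv C (2 * y₀ - y)) (2 * y₀ - y) :=
          (hC.differentiable (by simp) _).hasDerivAt
        have ha2 : deriv A (2 * y₀ - y) * (-1) = a' := (hA'.comp y hmir).unique ha
        have hb2 : deriv B (2 * y₀ - y) * (-1) = b' := (hB'.comp y hmir).unique hb
        have hc2 : deriv C (2 * y₀ - y) * (-1) = c' := (hC'.comp y hmir).unique hc
        have ha3 : HasDerivAt A (-a') (2 * y₀ - y) := by
          have he : -a' = deriv A (2 * y₀ - y) := by linarith
          rw [he]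
          exact hA'
        have hb3 : HasDerivAt B (-b') (2 * y₀ - y) := by
          have he : -b' = deriv B (2 * y₀ - y) := by linarith
          rw [he]
          exact hB'
        have hc3 : HasDerivAt C (-c') (2 * y₀ - y) := by
          have he : -c' = deriv C (2 * y₀ - y) := by linarith
          rw [he]
          exact hC'
        have h1' : 2 * A (2 * y₀ - y) * x + B (2 * y₀ - y) = 0 := h1
        exact hkey x (2 * y₀ - y) (-a') (-b') (-c') ha3 hb3 hc3 h1' (by linarith))
      y₀ x₀
      (by show A (2 * y₀ - y₀) = 0; rw [show 2 * y₀ - y₀ = y₀ by ring]; exact hy₀)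
      (fun y hy => by
        have := hyuniq _ hy
        linarith)
      (by show B (2 * y₀ - y₀) ≠ 0; rw [show 2 * y₀ - y₀ = y₀ by ring]; exact hB0)
      (by
        show B (2 * y₀ - y₀) * x₀ + C (2 * y₀ - y₀) = 0
        rw [show 2 * y₀ - y₀ = y₀ by ring]
        exact hx0eq)
      (by
        obtain ⟨y₂, h1, h2⟩ := hDnegL
        refine ⟨y₂, h1, ?_⟩
        show B (2 * y₀ - y₂) ^ 2 - 4 * A (2 * y₀ - y₂) * C (2 * y₀ - y₂) < 0
        rw [← hΔ]; exact h2)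
  -- transport the left half through the reflection homeomorphism
  set R : ℝ × ℝ → ℝ × ℝ := fun v => (v.1, 2 * y₀ - v.2) with hR
  have hRc : Continuous R := by
    apply Continuous.prodMk continuous_fst
    exact continuous_const.sub continuous_snd
  have hLeq : {v : ℝ × ℝ | p v = 0 ∧ v.2 ≤ y₀}
      = R '' {v : ℝ × ℝ | p (v.1, 2 * y₀ - v.2) = 0 ∧ y₀ ≤ v.2} := by
    ext ⟨x, y⟩
    constructor
    · rintro ⟨hpv, hy⟩
      refine ⟨(x, 2 * y₀ - y), ⟨?_, by simp only [mem_setOf_eq]; linarith⟩, ?_⟩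
      · show p (x, 2 * y₀ - (2 * y₀ - y)) = 0
        rw [hσ]; exact hpv
      · show (x, 2 * y₀ - (2 * y₀ - y)) = (x, y)
        rw [hσ]
    · rintro ⟨⟨u, w⟩, ⟨hq1, hq2⟩, heq⟩
      have h1 : u = x := congrArg Prod.fst heq
      have h2 : 2 * y₀ - w = y := congrArg Prod.snd heq
      have hw : y₀ ≤ w := hq2
      subst h1
      subst h2
      exact ⟨hq1, by show 2 * y₀ - w ≤ y₀; linarith⟩
  have hconnL : IsConnected {v : ℝ × ℝ | p v = 0 ∧ v.2 ≤ y₀} := by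
    rw [hLeq]
    exact hconnL'.image R hRc.continuousOn
  have hmemL : (x₀, y₀) ∈ {v : ℝ × ℝ | p v = 0 ∧ v.2 ≤ y₀} := by
    refine ⟨?_, le_refl _⟩
    rw [hp, hy₀]
    linarith
  have hunion : {v : ℝ × ℝ | p v = 0}
      = {v : ℝ × ℝ | p v = 0 ∧ y₀ ≤ v.2} ∪ {v : ℝ × ℝ | p v = 0 ∧ v.2 ≤ y₀} := by
    ext v
    simp only [mem_setOf_eq, mem_union]
    constructor
    · intro h
      rcases le_total y₀ v.2 with h1 | h1
      · exact Or.inl ⟨h, h1⟩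
      · exact Or.inr ⟨h, h1⟩
    · rintro (⟨h, _⟩ | ⟨h, _⟩) <;> exact h
  rw [hunion]
  exact IsConnected.union ⟨(x₀, y₀), hmemR, hmemL⟩ hconnR hconnL
end

section
/- Given a natural number N and real numbers b₀, b₁, …, b_N, define the real polynomial L(θ) = Σ_{j=0}^{N} b_j·(2(j+1)θ + 2j+1)·θ^j. Then either L is the zero polynomial, or there exist θ₁, θ₂ ∈ ℝ such that L(θ₁) < 0 < L(θ₂). In particular, if L(θ) ≥ 0 for all θ ∈ ℝ, then all coefficients b₀, …, b_N are zero. -/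
open Finset

/-! Put `P(θ) = Σ_j b_j θ^j` and `F(x) = sin x cos x · P(-sin² x)`. Since
`d/dx (sin x cos x (-sin² x)^j) = (2(j+1)θ + 2j+1) θ^j` at `θ = -sin² x`, we have
`F' = L(-sin² x)`. If `L ≥ 0`, then `F` is monotone with `F 0 = F π = 0`, so `F` vanishes
on `[0, π]`; hence `P` vanishes on `(-1, 0)`, so `P = 0` and every `b_j` is zero.
Applying this to `b` and `-b` gives the sign dichotomy. -/

section

open Real Polynomial

noncomputable def brunaSum (s : Finset ℕ) (b : ℕ → ℝ) (θ : ℝ) : ℝ :=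
  ∑ j ∈ s, b j * (2 * ((j : ℝ) + 1) * θ + (2 * j + 1)) * θ ^ j

theorem brunaSum_neg (s : Finset ℕ) (b : ℕ → ℝ) (θ : ℝ) :
    brunaSum s (-b) θ = -brunaSum s b θ := by
  simp only [brunaSum, Pi.neg_apply, neg_mul, sum_neg_distrib]

theorem hasDerivAt_sin_mul_cos_mul_neg_sin_sq_pow (j : ℕ) (x : ℝ) :
    HasDerivAt (fun x => sin x * cos x * (-sin x ^ 2) ^ j)
      ((2 * ((j : ℝ) + 1) * -sin x ^ 2 + (2 * j + 1)) * (-sin x ^ 2) ^ j) x := by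
  have h : HasDerivAt (fun x => (-1) ^ j * (sin x ^ (2 * j + 1) * cos x))
      ((-1) ^ j * ((2 * j + 1 : ℕ) * sin x ^ (2 * j) * cos x * cos x
        + sin x ^ (2 * j + 1) * -sin x)) x :=
    (((hasDerivAt_sin x).pow _).mul (hasDerivAt_cos x)).const_mul _
  convert h using 1
  · ext y
    rw [neg_pow, ← pow_mul]
    ring
  · rw [neg_pow, ← pow_mul]
    push_cast
    linear_combination (-(-1) ^ j * (2 * (j : ℝ) + 1) * sin x ^ (2 * j)) * cos_sq' x

theorem hasDerivAt_sin_mul_cos_mul_sum (s : Finset ℕ) (b : ℕ → ℝ) (x : ℝ) :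
    HasDerivAt (fun x => sin x * cos x * ∑ j ∈ s, b j * (-sin x ^ 2) ^ j)
      (brunaSum s b (-sin x ^ 2)) x := by
  have hF : (fun x => sin x * cos x * ∑ j ∈ s, b j * (-sin x ^ 2) ^ j)
      = fun x => ∑ j ∈ s, b j * (sin x * cos x * (-sin x ^ 2) ^ j) := by
    ext y
    rw [mul_sum]
    exact sum_congr rfl fun j _ => by ring
  rw [hF]
  refine (HasDerivAt.fun_sum fun j _ =>
    (hasDerivAt_sin_mul_cos_mul_neg_sin_sq_pow j x).const_mul (b j)).congr_deriv ?_
  exact sum_congr rfl fun j _ => by ring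

theorem sum_mul_neg_sin_sq_pow_eq_zero_of_brunaSum_nonneg {s : Finset ℕ} {b : ℕ → ℝ}
    (h : ∀ θ, 0 ≤ brunaSum s b θ) {x : ℝ} (hx : x ∈ Set.Ioo 0 (π / 2)) :
    ∑ j ∈ s, b j * (-sin x ^ 2) ^ j = 0 := by
  set F := fun x => sin x * cos x * ∑ j ∈ s, b j * (-sin x ^ 2) ^ j
  have hF := hasDerivAt_sin_mul_cos_mul_sum s b
  have hmono : Monotone F :=
    monotone_of_deriv_nonneg (fun x => (hF x).differentiableAt) fun x => (hF x).deriv ▸ h _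
  have hFx : F x = 0 := by
    refine le_antisymm ?_ ?_
    · simpa [F] using hmono (show x ≤ π by linarith [hx.2, pi_pos])
    · simpa [F] using hmono hx.1.le
  have hsin : 0 < sin x := sin_pos_of_pos_of_lt_pi hx.1 (by linarith [hx.2, pi_pos])
  have hcos : 0 < cos x := cos_pos_of_mem_Ioo ⟨by linarith [hx.1, pi_pos], hx.2⟩
  exact (mul_eq_zero.1 hFx).resolve_left (mul_pos hsin hcos).ne'

theorem injOn_neg_sin_sq : Set.InjOn (fun x => -sin x ^ 2) (Set.Ioo 0 (π / 2)) := by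
  intro x hx y hy hxy
  have hx' : x ∈ Set.Icc (-(π / 2)) (π / 2) := ⟨by linarith [hx.1, pi_pos], hx.2.le⟩
  have hy' : y ∈ Set.Icc (-(π / 2)) (π / 2) := ⟨by linarith [hy.1, pi_pos], hy.2.le⟩
  have hsx : 0 ≤ sin x := sin_nonneg_of_nonneg_of_le_pi hx.1.le (by linarith [hx.2, pi_pos])
  have hsy : 0 ≤ sin y := sin_nonneg_of_nonneg_of_le_pi hy.1.le (by linarith [hy.2, pi_pos])
  exact injOn_sin hx' hy' ((pow_left_inj₀ hsx hsy two_ne_zero).1 (neg_inj.1 hxy))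

theorem eq_zero_of_brunaSum_nonneg {s : Finset ℕ} {b : ℕ → ℝ}
    (h : ∀ θ, 0 ≤ brunaSum s b θ) : ∀ j ∈ s, b j = 0 := by
  set P : ℝ[X] := ∑ j ∈ s, C (b j) * X ^ j
  have hroots : Set.Infinite {θ | P.IsRoot θ} := by
    refine Set.infinite_of_injOn_mapsTo injOn_neg_sin_sq (fun x hx => ?_)
      (Set.Ioo_infinite (by positivity))
    simpa [P, eval_finsetSum] using sum_mul_neg_sin_sq_pow_eq_zero_of_brunaSum_nonneg h hx
  intro j hj
  simpa [P, finsetSum_coeff, coeff_C_mul_X_pow, hj] using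
    congrArg (coeff · j) (eq_zero_of_infinite_isRoot P hroots)

theorem brunaSum_eq_zero_of_nonneg {s : Finset ℕ} {b : ℕ → ℝ}
    (h : ∀ θ, 0 ≤ brunaSum s b θ) (θ : ℝ) : brunaSum s b θ = 0 :=
  sum_eq_zero fun j hj => by rw [eq_zero_of_brunaSum_nonneg h j hj, zero_mul, zero_mul]

end

/-- For `L(θ) = Σ_{j=0}^{N} b_j (2(j+1)θ + 2j+1) θ^j`:
either `L` is identically zero, or `L` takes both a negative and a positive
value.  In particular, if `L ≥ 0` everywhere then all `b_j` vanish. -/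
theorem bruna_lemma
    (N : ℕ) (b : ℕ → ℝ) (L : ℝ → ℝ)
    (hL : L = fun θ : ℝ => ∑ j ∈ Finset.range (N + 1),
      b j * (2 * ((j : ℝ) + 1) * θ + (2 * (j : ℝ) + 1)) * θ ^ j) :
    ((∀ θ : ℝ, L θ = 0) ∨ ∃ θ₁ θ₂ : ℝ, L θ₁ < 0 ∧ 0 < L θ₂) ∧
    ((∀ θ : ℝ, 0 ≤ L θ) → ∀ j ≤ N, b j = 0) := by
  change L = brunaSum (range (N + 1)) b at hL
  subst hL
  refine ⟨?_, fun h j hj => eq_zero_of_brunaSum_nonneg h j (mem_range.2 (by omega))⟩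
  by_cases hpos : ∀ θ, 0 ≤ brunaSum (range (N + 1)) b θ
  · exact Or.inl (brunaSum_eq_zero_of_nonneg hpos)
  by_cases hneg : ∀ θ, brunaSum (range (N + 1)) b θ ≤ 0
  · refine Or.inl fun θ => neg_eq_zero.1 ?_
    rw [← brunaSum_neg]
    exact brunaSum_eq_zero_of_nonneg (fun θ => by simpa [brunaSum_neg] using hneg θ) θ
  obtain ⟨θ₁, h₁⟩ := not_forall.1 hpos
  obtain ⟨θ₂, h₂⟩ := not_forall.1 hneg
  exact Or.inr ⟨θ₁, θ₂, not_le.1 h₁, not_le.1 h₂⟩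
end
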